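/- arXiv:1111.0587 — 5 statements merged into one kernel-verified Lean document; each statement's English description precedes it below -/
import Mathlib

section
/- Let t ≥ 1 and let C be an m×n t-covering array over B_q with n ≥ t. Then for every column c of C, the weight wt(c) satisfies (q−1)·CAN(t−1,n−1,q) ≤ wt(c) ≤ m − CAN(t−1,n−1,q). -/
/-- An `m × n` matrix over `B_q = {0,…,q-1}` is a `t`-covering array if for any `t`
distinct column indices and any `q`-ary vector of length `t`, some row realizes it. -/
def IsCoveringArray (m n q t : ℕ) (C : Fin m → Fin n → Fin q) : Prop :=
  ∀ cols : Fin t → Fin n, Function.Injective cols →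
    ∀ v : Fin t → Fin q, ∃ r : Fin m, ∀ j : Fin t, C r (cols j) = v j

/-- `CAN t n q` : the minimal size `m` for which a `CA(m; t, n, q)` exists. -/
noncomputable def CAN (t n q : ℕ) : ℕ :=
  sInf { m | ∃ C : Fin m → Fin n → Fin q, IsCoveringArray m n q t C }

/-- The weight of the `i`-th column: the number of nonzero entries. -/
def colWt {m n q : ℕ} (C : Fin m → Fin n → Fin q) (i : Fin n) : ℕ :=
  (Finset.univ.filter fun r : Fin m => (C r i : ℕ) ≠ 0).card

/-- The support of the `i`-th column: the set of coordinates where it is nonzero. -/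
def colSupp {m n q : ℕ} (C : Fin m → Fin n → Fin q) (i : Fin n) : Finset (Fin m) :=
  Finset.univ.filter fun r : Fin m => (C r i : ℕ) ≠ 0

/-- The Hamming distance between the `i`-th and `j`-th columns. -/
def colDist {m n q : ℕ} (C : Fin m → Fin n → Fin q) (i j : Fin n) : ℕ :=
  (Finset.univ.filter fun r : Fin m => C r i ≠ C r j).card

/-- Two arrays are equivalent if one is obtained from the other by a row permutation,
a column permutation, and value permutations applied columnwise. -/
def CAEquiv {m n q : ℕ} (C C' : Fin m → Fin n → Fin q) : Prop :=
  ∃ (σ : Equiv.Perm (Fin m)) (τ : Equiv.Perm (Fin n)) (f : Fin n → Equiv.Perm (Fin q)),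
    ∀ r i, C' r i = f i (C (σ r) (τ i))

/-- The standard maximal binary 2-covering array of size `m` : an
`m × (m-1).choose (m/2 - 1)` binary matrix whose first row is all ones and whose columns,
restricted to the remaining `m - 1` rows, are exactly (i.e. are pairwise distinct) the binary
vectors of length `m-1` with `m/2 - 1` ones. -/
def IsStandardMaxArray (m : ℕ) (S : Fin m → Fin ((m-1).choose (m/2 - 1)) → Fin 2) : Prop :=
  (∀ (r : Fin m) (i), (r : ℕ) = 0 → S r i = 1) ∧
  (Function.Injective fun i => fun r => S r i) ∧
  (∀ i, (Finset.univ.filter fun r : Fin m => (r : ℕ) ≠ 0 ∧ S r i = 1).card = m/2 - 1)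

/-- Key lemma: the number of rows where column `i` takes value `a` is at least
`CAN (t-1) (n-1) q`. -/
lemma can_le_fiber_card {m n q t : ℕ} (ht : 1 ≤ t) (hn : t ≤ n)
    (C : Fin m → Fin n → Fin q) (hC : IsCoveringArray m n q t C) (i : Fin n) (a : Fin q) :
    CAN (t-1) (n-1) q ≤ (Finset.univ.filter fun r => C r i = a).card := by
  set s := Finset.univ.filter (fun r => C r i = a) with hs
  have hιlt : ∀ j : Fin (n-1), (if (j:ℕ) < (i:ℕ) then (j:ℕ) else (j:ℕ)+1) < n := by
    intro j; have := j.isLt; have := i.isLt; split <;> omega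
  set ι : Fin (n-1) → Fin n := fun j => ⟨_, hιlt j⟩ with hιdef
  have hιval : ∀ j : Fin (n-1), (ι j : ℕ) = if (j:ℕ) < (i:ℕ) then (j:ℕ) else (j:ℕ)+1 := by
    intro j; rfl
  have hιi : ∀ j, ι j ≠ i := by
    intro j h
    have h2 := congrArg Fin.val h
    rw [hιval] at h2
    split at h2 <;> omega
  have hιinj : Function.Injective ι := by
    intro j1 j2 h
    have h2 := congrArg Fin.val h
    rw [hιval, hιval] at h2
    apply Fin.ext
    have := j1.isLt; have := j2.isLt
    split at h2 <;> split at h2 <;> omega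
  have hcov : IsCoveringArray s.card (n-1) q (t-1)
      (fun r j => C (s.equivFin.symm r) (ι j)) := by
    intro cols hinj v
    set cols' : Fin t → Fin n := fun j =>
      if h : (j:ℕ) < t-1 then ι (cols ⟨j, h⟩) else i with hcols'
    set v' : Fin t → Fin q := fun j =>
      if h : (j:ℕ) < t-1 then v ⟨j, h⟩ else a with hv'
    have hinj' : Function.Injective cols' := by
      intro j1 j2 h
      simp only [hcols'] at h
      apply Fin.ext
      have hl1 := j1.isLt; have hl2 := j2.isLt
      by_cases h1 : (j1:ℕ) < t-1 <;> by_cases h2 : (j2:ℕ) < t-1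
      · rw [dif_pos h1, dif_pos h2] at h
        have := congrArg Fin.val (hinj (hιinj h))
        simpa using this
      · rw [dif_pos h1, dif_neg h2] at h
        exact absurd h (hιi _)
      · rw [dif_neg h1, dif_pos h2] at h
        exact absurd h.symm (hιi _)
      · omega
    obtain ⟨r, hr⟩ := hC cols' hinj' v'
    have hri : C r i = a := by
      have h := hr ⟨t-1, by omega⟩
      simp only [hcols', hv'] at h
      rw [dif_neg (by simp), dif_neg (by simp)] at h
      exact h
    have rmem : r ∈ s := by simp [hs, hri]
    refine ⟨s.equivFin ⟨r, rmem⟩, ?_⟩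
    intro j
    have hjlt : (j:ℕ) < t := by have := j.isLt; omega
    have h := hr ⟨j, hjlt⟩
    simp only [hcols', hv'] at h
    rw [dif_pos j.isLt, dif_pos j.isLt] at h
    simp only [Fin.eta] at h
    simpa [Equiv.symm_apply_apply] using h
  exact Nat.sInf_le ⟨_, hcov⟩

/-- weight bounds for the columns of a `t`-covering array. -/
theorem column_weight_bounds (m n q t : ℕ) (ht : 1 ≤ t) (hn : t ≤ n)
    (C : Fin m → Fin n → Fin q) (hC : IsCoveringArray m n q t C) (i : Fin n) :
    (q - 1) * CAN (t - 1) (n - 1) q ≤ colWt C i ∧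
      colWt C i ≤ m - CAN (t - 1) (n - 1) q := by
  rcases Nat.eq_zero_or_pos q with hq | hq
  · subst hq
    have hm : m = 0 := by
      by_contra hm
      exact (C ⟨0, Nat.pos_of_ne_zero hm⟩ i).elim0
    subst hm
    simp [colWt]
  · -- q ≥ 1
    have key0 := can_le_fiber_card ht hn C hC i ⟨0, hq⟩
    have hsplit : (Finset.univ.filter fun r => C r i = ⟨0, hq⟩).card + colWt C i ≤ m := by
      rw [colWt]
      have heq : (Finset.univ.filter fun r : Fin m => (C r i : ℕ) ≠ 0)
          = Finset.univ.filter fun r : Fin m => ¬ (C r i = ⟨0, hq⟩) := by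
        ext r; simp [Fin.ext_iff]
      rw [heq, Finset.card_filter_add_card_filter_not]
      simp
    have hfiber : colWt C i = ∑ a ∈ Finset.univ.filter (fun a : Fin q => (a:ℕ) ≠ 0),
        (Finset.univ.filter fun r => C r i = a).card := by
      rw [colWt,
        Finset.card_eq_sum_card_fiberwise
          (t := Finset.univ.filter (fun a : Fin q => (a:ℕ) ≠ 0)) (f := fun r => C r i)
          (fun r hr => by simp at hr ⊢; exact hr)]
      apply Finset.sum_congr rfl
      intro a ha
      congr 1
      ext r
      simp only [Finset.mem_filter, Finset.mem_univ, true_and]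
      constructor
      · rintro ⟨_, h⟩; exact h
      · intro h
        refine ⟨?_, h⟩
        rw [h]
        exact (Finset.mem_filter.mp ha).2
    have hcardfilter : (Finset.univ.filter fun a : Fin q => (a:ℕ) ≠ 0).card = q - 1 := by
      have heq : (Finset.univ.filter fun a : Fin q => (a:ℕ) ≠ 0)
          = Finset.univ \ {(⟨0, hq⟩ : Fin q)} := by
        ext a; simp [Fin.ext_iff]
      rw [heq, Finset.card_sdiff_of_subset (by simp)]
      simp
    constructor
    · calc (q - 1) * CAN (t-1) (n-1) q
          = ∑ _a ∈ Finset.univ.filter (fun a : Fin q => (a:ℕ) ≠ 0),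
              CAN (t-1) (n-1) q := by
            rw [Finset.sum_const, hcardfilter, smul_eq_mul]
        _ ≤ ∑ a ∈ Finset.univ.filter (fun a : Fin q => (a:ℕ) ≠ 0),
              (Finset.univ.filter fun r => C r i = a).card :=
            Finset.sum_le_sum (fun a _ => can_le_fiber_card ht hn C hC i a)
        _ = colWt C i := hfiber.symm
    · omega
end

section
/- For every m ≥ 4, there exists a binary 2-covering array of size m and degree binom(m−1, ⌊m/2⌋−1); that is, the maximal degree of a binary 2-covering array of size m satisfies CAN̄(2,m,2) ≥ binom(m−1, ⌊m/2⌋−1). In particular, the standard maximal binary 2-covering array of size m is a 2-covering array. -/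
/-!
Let columns `a ≠ b` of a standard array be given. The all-ones first row covers `(1, 1)`. The
columns are distinct of equal weight `m/2`, so neither support contains the other, which covers
`(1, 0)` and `(0, 1)`. Both supports contain the first row, so their union has at most
`2 * (m/2) - 1 < m` rows and some row covers `(0, 0)`.
-/

open Finset

theorem isCoveringArray_two_iff {m n q : ℕ} (C : Fin m → Fin n → Fin q) :
    IsCoveringArray m n q 2 C ↔ ∀ a b, a ≠ b → ∀ x y, ∃ r, C r a = x ∧ C r b = y := by
  constructor
  · intro hC a b hab x y
    have hinj : Function.Injective ![a, b] := by
      intro i j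
      fin_cases i <;> fin_cases j <;> simp [hab, hab.symm]
    obtain ⟨r, hr⟩ := hC ![a, b] hinj ![x, y]
    exact ⟨r, hr 0, hr 1⟩
  · intro hC cols hcols v
    obtain ⟨r, h0, h1⟩ := hC (cols 0) (cols 1) (hcols.ne (by decide)) (v 0) (v 1)
    exact ⟨r, Fin.forall_fin_two.2 ⟨h0, h1⟩⟩

section Binary

variable {m n : ℕ} (C : Fin m → Fin n → Fin 2)

theorem mem_colSupp_iff_eq_one {r : Fin m} {i : Fin n} : r ∈ colSupp C i ↔ C r i = 1 := by
  simp only [colSupp, mem_filter, mem_univ, true_and]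
  omega

theorem colSupp_injective (hC : Function.Injective fun i r => C r i) :
    Function.Injective (colSupp C) := by
  intro a b hab
  refine hC (funext fun r => ?_)
  have hr := congrArg (r ∈ ·) hab
  simp only [mem_colSupp_iff_eq_one, eq_iff_iff] at hr
  show C r a = C r b
  omega

theorem isCoveringArray_two_of_constant_weight {w : ℕ} (r₀ : Fin m) (h_one : ∀ i, C r₀ i = 1)
    (h_inj : Function.Injective fun i r => C r i) (h_wt : ∀ i, colWt C i = w) (h_w : 2 * w ≤ m) :
    IsCoveringArray m n 2 2 C := by
  have h_card (i : Fin n) : #(colSupp C i) = w := h_wt i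
  have one_zero (a b : Fin n) (hab : a ≠ b) : ∃ r, C r a = 1 ∧ C r b = 0 := by
    have hsub : ¬ colSupp C a ⊆ colSupp C b := fun hsub =>
      hab (colSupp_injective C h_inj (eq_of_subset_of_card_le hsub (by rw [h_card, h_card])))
    obtain ⟨r, hra, hrb⟩ := not_subset.1 hsub
    rw [mem_colSupp_iff_eq_one] at hra hrb
    exact ⟨r, hra, by omega⟩
  have zero_zero (a b : Fin n) : ∃ r, C r a = 0 ∧ C r b = 0 := by
    have hinter : 1 ≤ #(colSupp C a ∩ colSupp C b) :=
      one_le_card.2 ⟨r₀, mem_inter.2 (by simp only [mem_colSupp_iff_eq_one, h_one, and_self])⟩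
    have hunion : #(colSupp C a ∪ colSupp C b) < #(univ : Finset (Fin m)) := by
      have := card_union_add_card_inter (colSupp C a) (colSupp C b)
      rw [h_card, h_card] at this
      rw [card_univ, Fintype.card_fin]
      omega
    obtain ⟨r, -, hr⟩ := exists_mem_notMem_of_card_lt_card hunion
    simp only [mem_union, mem_colSupp_iff_eq_one, not_or] at hr
    exact ⟨r, by omega, by omega⟩
  rw [isCoveringArray_two_iff]
  intro a b hab x y
  fin_cases x <;> fin_cases y
  · exact zero_zero a b
  · exact (one_zero b a hab.symm).imp fun _ h => h.symm
  · exact one_zero a b hab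
  · exact ⟨r₀, h_one a, h_one b⟩

end Binary

theorem IsStandardMaxArray.colWt_eq {m : ℕ} [NeZero m]
    {S : Fin m → Fin ((m-1).choose (m/2 - 1)) → Fin 2} (hS : IsStandardMaxArray m S)
    (i : Fin ((m-1).choose (m/2 - 1))) :
    colWt S i = m/2 - 1 + 1 := by
  have hsupp : colSupp S i = insert 0 (univ.filter fun r : Fin m => (r : ℕ) ≠ 0 ∧ S r i = 1) := by
    ext r
    simp only [mem_colSupp_iff_eq_one, mem_insert, mem_filter, mem_univ, true_and, Fin.ext_iff,
      Fin.val_zero]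
    by_cases hr : (r : ℕ) = 0
    · simp [hS.1 r i hr, hr]
    · simp [hr]
  show #(colSupp S i) = _
  rw [hsupp, card_insert_of_notMem (by simp), hS.2.2 i]

theorem IsStandardMaxArray.isCoveringArray {m : ℕ} (hm : 2 ≤ m)
    {S : Fin m → Fin ((m-1).choose (m/2 - 1)) → Fin 2} (hS : IsStandardMaxArray m S) :
    IsCoveringArray m ((m-1).choose (m/2 - 1)) 2 2 S := by
  have : NeZero m := ⟨by omega⟩
  exact isCoveringArray_two_of_constant_weight S 0 (fun i => hS.1 0 i rfl) hS.2.1 hS.colWt_eq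
    (by omega)

noncomputable def finChooseEquivSubsets (N k : ℕ) :
    Fin (N.choose k) ≃ {s : Finset (Fin N) // #s = k} :=
  (Fintype.equivFinOfCardEq (by rw [Fintype.card_finset_len, Fintype.card_fin])).symm

noncomputable def standardArray (N k : ℕ) : Fin (N + 1) → Fin (N.choose k) → Fin 2 :=
  fun r i => Fin.cases 1 (fun x => if x ∈ (finChooseEquivSubsets N k i).1 then 1 else 0) r

theorem standardArray_succ (N k : ℕ) (x : Fin N) (i : Fin (N.choose k)) :
    standardArray N k x.succ i = if x ∈ (finChooseEquivSubsets N k i).1 then 1 else 0 :=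
  rfl

theorem isStandardMaxArray_standardArray (N : ℕ) :
    IsStandardMaxArray (N + 1) (standardArray N ((N + 1) / 2 - 1)) := by
  refine ⟨fun r i hr => ?_, fun a b hab => ?_, fun i => ?_⟩
  · obtain rfl : r = 0 := Fin.ext hr
    rfl
  · refine (finChooseEquivSubsets N _).injective (Subtype.ext (Finset.ext fun x => ?_))
    have := congrFun hab x.succ
    simp only [standardArray_succ] at this
    split_ifs at this <;> simp_all
  · have hfilter : (univ.filter fun r : Fin (N + 1) => (r : ℕ) ≠ 0 ∧
        standardArray N ((N + 1) / 2 - 1) r i = 1) =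
        (finChooseEquivSubsets N _ i).1.map (Fin.succEmb N) := by
      ext r
      cases r using Fin.cases with
      | zero => simp
      | succ x => simp [standardArray_succ]
    rw [hfilter, card_map, (finChooseEquivSubsets N _ i).2]

/-- for `m ≥ 4` there exists a binary 2-covering array of size `m` and degree
`(m-1).choose (m/2 - 1)`, i.e. `CAN̄(2,m,2) ≥ (m-1).choose (m/2 - 1)`; in particular every
standard maximal binary 2-covering array is a 2-covering array. -/
theorem standard_maximal_lower_bound (m : ℕ) (hm : 4 ≤ m) :
    (∃ C : Fin m → Fin ((m-1).choose (m/2 - 1)) → Fin 2,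
      IsCoveringArray m ((m-1).choose (m/2 - 1)) 2 2 C) ∧
    (∀ S : Fin m → Fin ((m-1).choose (m/2 - 1)) → Fin 2,
      IsStandardMaxArray m S → IsCoveringArray m ((m-1).choose (m/2 - 1)) 2 2 S) := by
  have hcov : ∀ S, IsStandardMaxArray m S → IsCoveringArray m ((m-1).choose (m/2 - 1)) 2 2 S :=
    fun S hS => hS.isCoveringArray (by omega)
  obtain ⟨N, rfl⟩ : ∃ N, m = N + 1 := ⟨m - 1, by omega⟩
  exact ⟨⟨_, hcov _ (isStandardMaxArray_standardArray N)⟩, hcov⟩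
end

section
/- For every m ≥ 4, every m×n binary 2-covering array satisfies n ≤ binom(m−1, ⌊m/2⌋−1); that is, the maximal degree of a binary 2-covering array of size m satisfies CAN̄(2,m,2) ≤ binom(m−1, ⌊m/2⌋−1). -/
/-!
For every column take the set of rows in which it has its minority value. The covering property
makes these `n` sets, each of size at most `⌊m/2⌋`, pairwise intersecting and pairwise
incomparable. Pushing such a family up to level `⌊m/2⌋` (LYM applied to the complements) yields an
intersecting `⌊m/2⌋`-uniform family at least as large, which Erdős–Ko–Rado bounds by
`(m-1).choose (⌊m/2⌋ - 1)`.
-/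

open Finset
open scoped FinsetFamily

section SetFamily

variable {α : Type*} [DecidableEq α] [Fintype α] {𝒜 : Finset (Finset α)}

theorem Set.Sized.card_le_card_shadow {r : ℕ} (h𝒜 : (𝒜 : Set (Finset α)).Sized r)
    (hr : Fintype.card α < 2 * r) : #𝒜 ≤ #(∂ 𝒜) :=
  Nat.le_of_mul_le_mul_right
    ((card_mul_le_card_shadow_mul h𝒜).trans (Nat.mul_le_mul_left _ (by omega))) (by omega)

theorem IsAntichain.card_filter_le_card_falling (h𝒜 : IsAntichain (· ⊆ ·) (𝒜 : Set (Finset α)))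
    {k : ℕ} (hk : Fintype.card α ≤ 2 * k + 1) : #{s ∈ 𝒜 | k ≤ #s} ≤ #(falling k 𝒜) := by
  obtain ⟨d, hd⟩ : ∃ d, Fintype.card α - k = d := ⟨_, rfl⟩
  induction d generalizing k with
  | zero =>
    refine card_le_card fun s hs => slice_subset_falling k 𝒜 (mem_slice.2 ⟨(mem_filter.1 hs).1, ?_⟩)
    have := card_le_univ s
    have := (mem_filter.1 hs).2
    omega
  | succ d ih =>
    have hsplit : {s ∈ 𝒜 | k ≤ #s} = 𝒜 # k ∪ {s ∈ 𝒜 | k + 1 ≤ #s} := by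
      ext s
      simp only [mem_filter, mem_union, mem_slice]
      grind
    calc #{s ∈ 𝒜 | k ≤ #s}
        ≤ #(𝒜 # k) + #{s ∈ 𝒜 | k + 1 ≤ #s} := hsplit ▸ card_union_le _ _
      _ ≤ #(𝒜 # k) + #(∂ (falling (k + 1) 𝒜)) := by
        refine Nat.add_le_add_left ((ih (k := k + 1) (by omega) (by omega)).trans ?_) _
        exact (sized_falling _ _).card_le_card_shadow (by omega)
      _ = #(falling k 𝒜) := by
        rw [← card_union_of_disjoint h𝒜.disjoint_slice_shadow_falling,
          slice_union_shadow_falling_succ]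

end SetFamily

theorem erdos_ko_rado_of_isAntichain {n r : ℕ} {𝒜 : Finset (Finset (Fin n))}
    (h𝒜 : IsAntichain (· ⊆ ·) (𝒜 : Set (Finset (Fin n))))
    (hint : (𝒜 : Set (Finset (Fin n))).Intersecting) (h𝒜r : ∀ s ∈ 𝒜, #s ≤ r) (hr : r ≤ n / 2) :
    #𝒜 ≤ (n - 1).choose (r - 1) := by
  -- the `r`-sets containing a member of `𝒜`
  set ℬ := (falling (n - r) 𝒜ᶜˢ)ᶜˢ
  have hℬ : ∀ t ∈ ℬ, ∃ s ∈ 𝒜, s ⊆ t := by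
    intro t ht
    obtain ⟨⟨u, hu, htu⟩, -⟩ := mem_falling.1 (mem_compls.1 ht)
    exact ⟨uᶜ, mem_compls.1 hu, by simpa using compl_subset_compl.2 htu⟩
  have hℬint : (ℬ : Set (Finset (Fin n))).Intersecting := by
    intro t ht t' ht' htt'
    obtain ⟨s, hs, hst⟩ := hℬ t ht
    obtain ⟨s', hs', hst'⟩ := hℬ t' ht'
    exact hint hs hs' (htt'.mono hst hst')
  have hℬr : (ℬ : Set (Finset (Fin n))).Sized r := by
    have h := (sized_falling (n - r) 𝒜ᶜˢ).compls
    rwa [Fintype.card_fin, Nat.sub_sub_self (hr.trans (n.div_le_self 2))] at h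
  calc #𝒜 = #{s ∈ 𝒜ᶜˢ | n - r ≤ #s} := by
        rw [filter_true_of_mem, card_compls]
        intro s hs
        rw [← compl_compl s, card_compl, Fintype.card_fin]
        have := h𝒜r _ (mem_compls.1 hs)
        omega
    _ ≤ #(falling (n - r) 𝒜ᶜˢ) := by
        refine IsAntichain.card_filter_le_card_falling ?_ (by rw [Fintype.card_fin]; omega)
        rw [coe_compls]
        exact h𝒜.image_compl
    _ = #ℬ := by rw [card_compls]
    _ ≤ (n - 1).choose (r - 1) := erdos_ko_rado hℬint hℬr hr

def rowsWith {m n q : ℕ} (C : Fin m → Fin n → Fin q) (i : Fin n) (a : Fin q) : Finset (Fin m) :=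
  {r | C r i = a}

theorem exists_card_rowsWith_le_div {m n q : ℕ} (hq : 0 < q) (C : Fin m → Fin n → Fin q)
    (i : Fin n) : ∃ a, #(rowsWith C i a) ≤ m / q := by
  obtain ⟨a, ha⟩ := Fintype.exists_card_fiber_lt_of_card_lt_mul (f := fun r => C r i)
    (n := m / q + 1) (by simp only [Fintype.card_fin]; nlinarith [Nat.lt_div_mul_add (a := m) hq])
  exact ⟨a, Nat.lt_succ_iff.1 ha⟩

namespace IsCoveringArray

variable {m n q : ℕ} {C : Fin m → Fin n → Fin q}

theorem exists_row_eq_and_eq (hC : IsCoveringArray m n q 2 C) {i j : Fin n} (hij : i ≠ j)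
    (a b : Fin q) : ∃ r, C r i = a ∧ C r j = b := by
  obtain ⟨r, hr⟩ := hC ![i, j] (by
    intro x y hxy
    fin_cases x <;> fin_cases y <;> simp_all [eq_comm]) ![a, b]
  exact ⟨r, hr 0, hr 1⟩

theorem rowsWith_inter_nonempty (hC : IsCoveringArray m n q 2 C) {i j : Fin n} (hij : i ≠ j)
    (a b : Fin q) : (rowsWith C i a ∩ rowsWith C j b).Nonempty := by
  obtain ⟨r, hri, hrj⟩ := hC.exists_row_eq_and_eq hij a b
  exact ⟨r, by simp [rowsWith, hri, hrj]⟩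

theorem not_rowsWith_subset (hC : IsCoveringArray m n q 2 C) (hq : 1 < q) {i j : Fin n}
    (hij : i ≠ j) (a b : Fin q) : ¬ rowsWith C i a ⊆ rowsWith C j b := by
  have : Nontrivial (Fin q) := Fin.nontrivial_iff_two_le.2 hq
  obtain ⟨b', hb'⟩ := exists_ne b
  obtain ⟨r, hri, hrj⟩ := hC.exists_row_eq_and_eq hij a b'
  intro h
  have := h (by simp [rowsWith, hri] : r ∈ rowsWith C i a)
  simp [rowsWith, hrj, hb'] at this

theorem injective_rowsWith (hC : IsCoveringArray m n q 2 C) (hq : 1 < q) (w : Fin n → Fin q) :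
    Function.Injective fun i => rowsWith C i (w i) := fun i j h => by
  by_contra hij
  exact hC.not_rowsWith_subset hq hij _ _ h.subset

theorem isAntichain_image_rowsWith (hC : IsCoveringArray m n q 2 C) (hq : 1 < q)
    (w : Fin n → Fin q) :
    IsAntichain (· ⊆ ·)
      ((univ.image fun i => rowsWith C i (w i) : Finset _) : Set (Finset (Fin m))) := by
  rw [coe_image]
  rintro _ ⟨i, -, rfl⟩ _ ⟨j, -, rfl⟩ hne
  exact hC.not_rowsWith_subset hq (fun h => hne (by rw [h])) _ _

theorem intersecting_image_rowsWith (hC : IsCoveringArray m n q 2 C) (hn : 1 < n)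
    (w : Fin n → Fin q) :
    ((univ.image fun i => rowsWith C i (w i) : Finset _) : Set (Finset (Fin m))).Intersecting := by
  rw [coe_image]
  rintro _ ⟨i, -, rfl⟩ _ ⟨j, -, rfl⟩
  rw [not_disjoint_iff_nonempty_inter]
  by_cases hij : i = j
  · subst hij
    obtain ⟨j', hj'⟩ := Fintype.exists_ne_of_one_lt_card (by simpa using hn) i
    rw [inter_self]
    exact (hC.rowsWith_inter_nonempty hj'.symm _ (w j')).mono inter_subset_left
  · exact hC.rowsWith_inter_nonempty hij _ _

end IsCoveringArray

theorem max_degree_upper_bound_general (m n : ℕ) (C : Fin m → Fin n → Fin 2)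
    (hC : IsCoveringArray m n 2 2 C) :
    n ≤ (m-1).choose (m/2 - 1) := by
  obtain hn | hn := le_or_gt n 1
  · exact hn.trans (Nat.choose_pos (by omega))
  choose w hw using exists_card_rowsWith_le_div two_pos C
  have h := erdos_ko_rado_of_isAntichain (hC.isAntichain_image_rowsWith one_lt_two w)
    (hC.intersecting_image_rowsWith hn w) (by simpa using hw) le_rfl
  rwa [card_image_of_injective _ (hC.injective_rowsWith one_lt_two w), card_univ,
    Fintype.card_fin] at h

/-- for `m ≥ 4` the degree of any `m × n` binary 2-covering array satisfies
`n ≤ (m-1).choose (m/2 - 1)`, i.e. `CAN̄(2,m,2) ≤ (m-1).choose (m/2 - 1)`. -/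
theorem max_degree_upper_bound (m n : ℕ) (hm : 4 ≤ m) (C : Fin m → Fin n → Fin 2)
    (hC : IsCoveringArray m n 2 2 C) :
    n ≤ (m-1).choose (m/2 - 1) :=
  max_degree_upper_bound_general m n C hC
end

section
/- For m ≥ 4, every binary 2-covering array of size m and maximal degree n = binom(m−1, ⌊m/2⌋−1) is equivalent to the standard maximal binary 2-covering array of size m; in particular, any two such maximal binary 2-covering arrays are equivalent. -/
/-!
Fix a row `v` and record, for every column, the set of the other rows on which it agrees with
row `v`. The covering property says exactly that these agree sets are distinct, form an antichain,
and no two of them (equal or not) cover all rows. For the standard array and its first row they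
are all the `(⌊m/2⌋ - 1)`-subsets, each once; so it suffices to find a row around which every
agree set has size `⌊m/2⌋ - 1`, and then to match columns, rows and values.

For `m = 2k + 2` the agree sets live on `2k + 1` points and the LYM inequality leaves only the
layers `k` and `k + 1`; the shadow of the upper layer, the lower layer and the complements of the
upper layer are disjoint families of `k`-sets, so the upper layer is empty.

For `m = 2k + 3` the agree sets live on `2k + 2` points, and pushing the layers above the middle
layer `k + 1` down to their shadows never loses sets (local LYM). The middle layer holds at most
half of all `(k + 1)`-sets, so by Kruskal–Katona its shadow is at least that of an initial colex
segment, which lives on `2k + 1` points, where local LYM is strict unless the layer is empty or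
full. Hence a middle layer with fewer than `binom(2k+1, k+1)` sets is empty, and then all agree
sets have size `k`. Since a column has at most one class of `k + 2` rows, the middle layers of all
`2k + 3` rows hold at most `(k + 2) N = (2k + 2) binom(2k+1, k+1)` sets together, so some row has
a small middle layer.
-/

open Finset Finset.Colex
open scoped FinsetFamily

namespace Nat

theorem choose_strictMonoOn (n : ℕ) : StrictMonoOn n.choose (Set.Iic (n / 2)) := by
  refine strictMonoOn_of_lt_add_one Set.ordConnected_Iic fun a _ _ ha => ?_
  have hpos := choose_pos (show a ≤ n by simp at ha; omega)
  have hsucc := choose_succ_right_eq n a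
  have : a + 1 < n - a := by simp at ha; omega
  nlinarith

theorem le_choose_of_one_le_of_le_half {n k : ℕ} (hk : 1 ≤ k) (hkn : k ≤ n / 2) :
    n ≤ n.choose k := by
  simpa using (choose_strictMonoOn n).monotoneOn (a := 1) (by simp; omega) hkn hk

theorem eq_or_eq_add_one_of_choose_eq {k j : ℕ} (hj : j ≤ 2 * k + 1)
    (h : (2 * k + 1).choose j = (2 * k + 1).choose k) : j = k ∨ j = k + 1 := by
  have hmid : (2 * k + 1) / 2 = k := by omega
  rcases le_or_gt j k with hjk | hjk
  · exact .inl ((choose_strictMonoOn _).injOn (by simpa [hmid]) (by simp [hmid]) h)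
  · rw [← choose_symm hj] at h
    have := (choose_strictMonoOn _).injOn (by simp [hmid]; omega) (by simp [hmid]) h
    omega

theorem choose_two_mul_add_two (k : ℕ) :
    (2 * k + 2).choose (k + 1) = 2 * (2 * k + 1).choose (k + 1) := by
  rw [choose_succ_succ', ← choose_symm_half]
  ring

end Nat

section LYM

variable {α : Type*} [Fintype α] {𝒜 : Finset (Finset α)} {b : ℕ}

theorem IsAntichain.card_le_of_forall_choose_le
    (h𝒜 : IsAntichain (· ⊆ ·) (𝒜 : Set (Finset α)))
    (hb : ∀ s ∈ 𝒜, (Fintype.card α).choose #s ≤ b) : #𝒜 ≤ b := by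
  obtain rfl | ⟨s₀, hs₀⟩ := 𝒜.eq_empty_or_nonempty
  · simp
  have hb0 : (0 : ℚ) < b := by
    exact_mod_cast (Nat.choose_pos (card_le_univ s₀)).trans_le (hb s₀ hs₀)
  have hsum : ∑ s ∈ 𝒜, (b : ℚ)⁻¹ ≤ 1 :=
    (sum_le_sum fun s hs => inv_anti₀ (by exact_mod_cast Nat.choose_pos (card_le_univ s))
      (by exact_mod_cast hb s hs)).trans
      (lubell_yamamoto_meshalkin_inequality_sum_inv_choose h𝒜)
  rw [sum_const, nsmul_eq_mul, ← div_eq_mul_inv, div_le_one hb0] at hsum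
  exact_mod_cast hsum

theorem IsAntichain.choose_card_eq_of_forall_choose_le
    (h𝒜 : IsAntichain (· ⊆ ·) (𝒜 : Set (Finset α)))
    (hb : ∀ s ∈ 𝒜, (Fintype.card α).choose #s ≤ b) (h𝒜b : b ≤ #𝒜) :
    ∀ s ∈ 𝒜, (Fintype.card α).choose #s = b := by
  by_contra! ⟨s₀, hs₀, hne⟩
  have hb0 : (0 : ℚ) < b := by
    exact_mod_cast (Nat.choose_pos (card_le_univ s₀)).trans_le (hb s₀ hs₀)
  have hsum : ∑ s ∈ 𝒜, (b : ℚ)⁻¹ < 1 :=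
    (sum_lt_sum (fun s hs => inv_anti₀ (by exact_mod_cast Nat.choose_pos (card_le_univ s))
      (by exact_mod_cast hb s hs)) ⟨s₀, hs₀, inv_strictAnti₀
        (by exact_mod_cast Nat.choose_pos (card_le_univ s₀))
        (by exact_mod_cast (hb s₀ hs₀).lt_of_ne hne)⟩).trans_le
      (lubell_yamamoto_meshalkin_inequality_sum_inv_choose h𝒜)
  rw [sum_const, nsmul_eq_mul, ← div_eq_mul_inv, div_lt_one hb0] at hsum
  exact absurd h𝒜b (by exact_mod_cast hsum.not_ge)

end LYM

namespace Finset

section ShadowInOddSet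

variable {α : Type*} [DecidableEq α] {V D : Finset α} {k : ℕ} {𝒜 : Finset (Finset α)}

lemma card_mul_le_sum_card_filter_superset (h𝒜 : (𝒜 : Set (Finset α)).Sized (k + 1)) :
    #𝒜 * (k + 1) ≤ ∑ D ∈ ∂ 𝒜, #{s ∈ 𝒜 | D ⊆ s} := by
  calc #𝒜 * (k + 1) = ∑ s ∈ 𝒜, #s := by rw [sum_const_nat fun s hs => h𝒜 hs, mul_comm]
    _ ≤ ∑ s ∈ 𝒜, #(bipartiteAbove (fun s D => D ⊆ s) (∂ 𝒜) s) := by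
      refine sum_le_sum fun s hs => ?_
      rw [← card_image_of_injOn s.erase_injOn]
      refine card_le_card fun D hD => ?_
      obtain ⟨a, ha, rfl⟩ := mem_image.1 hD
      exact (mem_bipartiteAbove _).2 ⟨erase_mem_shadow hs ha, erase_subset _ _⟩
    _ = ∑ D ∈ ∂ 𝒜, #{s ∈ 𝒜 | D ⊆ s} := sum_card_bipartiteAbove_eq_sum_card_bipartiteBelow _

lemma card_filter_superset_le (h𝒜 : 𝒜 ⊆ powersetCard (k + 1) V) (hD : D ∈ ∂ 𝒜) :
    #{s ∈ 𝒜 | D ⊆ s} ≤ #{a ∈ V \ D | insert a D ∈ 𝒜} := by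
  have hDk : #D = k := Set.Sized.shadow (fun s hs => (mem_powersetCard.1 (h𝒜 hs)).2) hD
  refine (card_le_card fun s hs => ?_).trans (card_image_le (f := (insert · D)))
  obtain ⟨hs𝒜, hDs⟩ := mem_filter.1 hs
  obtain ⟨hsV, hsk⟩ := mem_powersetCard.1 (h𝒜 hs𝒜)
  obtain ⟨a, ha, rfl⟩ := exists_eq_insert_iff.2 ⟨hDs, by omega⟩
  exact mem_image_of_mem _ (mem_filter.2 ⟨mem_sdiff.2 ⟨hsV (mem_insert_self a D), ha⟩, hs𝒜⟩)

lemma card_sdiff_of_mem_shadow (hV : #V = 2 * k + 1) (h𝒜 : 𝒜 ⊆ powersetCard (k + 1) V)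
    (hD : D ∈ ∂ 𝒜) : #(V \ D) = k + 1 := by
  obtain ⟨u, hu, hDu⟩ := exists_subset_of_mem_shadow hD
  have hDk : #D = k := Set.Sized.shadow (fun s hs => (mem_powersetCard.1 (h𝒜 hs)).2) hD
  rw [card_sdiff_of_subset (hDu.trans (mem_powersetCard.1 (h𝒜 hu)).1)]
  omega

lemma card_filter_superset_le_succ (hV : #V = 2 * k + 1) (h𝒜 : 𝒜 ⊆ powersetCard (k + 1) V)
    (hD : D ∈ ∂ 𝒜) : #{s ∈ 𝒜 | D ⊆ s} ≤ k + 1 :=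
  (card_filter_superset_le h𝒜 hD).trans
    ((card_filter_le _ _).trans (card_sdiff_of_mem_shadow hV h𝒜 hD).le)

lemma exists_insert_erase_notMem (h𝒜 : 𝒜 ⊆ powersetCard (k + 1) V) (hne : 𝒜.Nonempty)
    (hproper : 𝒜 ≠ powersetCard (k + 1) V) :
    ∃ s ∈ 𝒜, ∃ a ∈ s, ∃ b ∈ V \ s, insert b (s.erase a) ∉ 𝒜 := by
  have hcompl : (powersetCard (k + 1) V \ 𝒜).Nonempty :=
    sdiff_nonempty.2 fun h => hproper (h𝒜.antisymm h)
  -- the exchange step is taken from the closest pair `s ∈ 𝒜`, `u ∉ 𝒜`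
  obtain ⟨⟨s, u⟩, hsu, hmax⟩ :=
    exists_max_image (𝒜 ×ˢ (powersetCard (k + 1) V \ 𝒜)) (fun p => #(p.1 ∩ p.2))
      (hne.product hcompl)
  obtain ⟨hs, hu⟩ : s ∈ 𝒜 ∧ u ∈ powersetCard (k + 1) V \ 𝒜 := mem_product.1 hsu
  obtain ⟨huP, hu𝒜⟩ := mem_sdiff.1 hu
  obtain ⟨huV, huk⟩ := mem_powersetCard.1 huP
  have hsk := (mem_powersetCard.1 (h𝒜 hs)).2
  have hsu : s ≠ u := fun h => hu𝒜 (h ▸ hs)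
  obtain ⟨a, has, hau⟩ := not_subset.1 fun h => hsu (eq_of_subset_of_card_le h (by omega))
  obtain ⟨b, hbu, hbs⟩ := not_subset.1 fun h => hsu (eq_of_subset_of_card_le h (by omega)).symm
  refine ⟨s, hs, a, has, b, mem_sdiff.2 ⟨huV hbu, hbs⟩, fun hs' => ?_⟩
  have hgrow : insert b (s ∩ u) ⊆ insert b (s.erase a) ∩ u := by
    refine insert_subset (mem_inter.2 ⟨mem_insert_self _ _, hbu⟩) fun x hx => ?_
    obtain ⟨hxs, hxu⟩ := mem_inter.1 hx
    exact mem_inter.2 ⟨mem_insert_of_mem (mem_erase.2 ⟨fun h => hau (h ▸ hxu), hxs⟩), hxu⟩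
  have hle : #(insert b (s.erase a) ∩ u) ≤ #(s ∩ u) :=
    hmax (insert b (s.erase a), u) (mem_product.2 ⟨hs', hu⟩)
  have := card_le_card hgrow
  rw [card_insert_of_notMem fun h => hbs (mem_inter.1 h).1] at this
  omega

theorem card_le_card_shadow_of_subset_powersetCard (hV : #V = 2 * k + 1)
    (h𝒜 : 𝒜 ⊆ powersetCard (k + 1) V) : #𝒜 ≤ #(∂ 𝒜) := by
  have hsized : (𝒜 : Set (Finset α)).Sized (k + 1) := fun s hs => (mem_powersetCard.1 (h𝒜 hs)).2
  refine Nat.le_of_mul_le_mul_right (c := k + 1) ?_ k.succ_pos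
  calc #𝒜 * (k + 1) ≤ ∑ D ∈ ∂ 𝒜, #{s ∈ 𝒜 | D ⊆ s} := card_mul_le_sum_card_filter_superset hsized
    _ ≤ ∑ D ∈ ∂ 𝒜, (k + 1) := sum_le_sum fun D hD => card_filter_superset_le_succ hV h𝒜 hD
    _ = #(∂ 𝒜) * (k + 1) := by rw [sum_const, smul_eq_mul]

theorem card_lt_card_shadow_of_subset_powersetCard (hV : #V = 2 * k + 1)
    (h𝒜 : 𝒜 ⊆ powersetCard (k + 1) V) (hne : 𝒜.Nonempty)
    (hproper : 𝒜 ≠ powersetCard (k + 1) V) : #𝒜 < #(∂ 𝒜) := by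
  obtain ⟨s, hs, a, has, b, hb, hb𝒜⟩ := exists_insert_erase_notMem h𝒜 hne hproper
  have hD : s.erase a ∈ ∂ 𝒜 := erase_mem_shadow hs has
  have hlt : #{u ∈ 𝒜 | s.erase a ⊆ u} < k + 1 := by
    refine (card_filter_superset_le h𝒜 hD).trans_lt ?_
    rw [← card_sdiff_of_mem_shadow hV h𝒜 hD]
    refine card_lt_card (filter_ssubset.2 ⟨b, ?_, hb𝒜⟩)
    obtain ⟨hbV, hbs⟩ := mem_sdiff.1 hb
    exact mem_sdiff.2 ⟨hbV, fun h => hbs (mem_of_mem_erase h)⟩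
  have hsized : (𝒜 : Set (Finset α)).Sized (k + 1) := fun s hs => (mem_powersetCard.1 (h𝒜 hs)).2
  refine Nat.lt_of_mul_lt_mul_right (a := k + 1) ?_
  calc #𝒜 * (k + 1) ≤ ∑ D ∈ ∂ 𝒜, #{u ∈ 𝒜 | D ⊆ u} := card_mul_le_sum_card_filter_superset hsized
    _ < ∑ D ∈ ∂ 𝒜, (k + 1) :=
      sum_lt_sum (fun D hD => card_filter_superset_le_succ hV h𝒜 hD) ⟨_, hD, hlt⟩
    _ = #(∂ 𝒜) * (k + 1) := by rw [sum_const, smul_eq_mul]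

end ShadowInOddSet

section MiddleLayer

variable {n r k : ℕ}

lemma exists_isInitSeg_card_eq {s : ℕ} (hs : s ≤ n.choose r) :
    ∃ 𝒞 : Finset (Finset (Fin n)), IsInitSeg 𝒞 r ∧ #𝒞 = s := by
  induction s with
  | zero => exact ⟨∅, isInitSeg_empty, card_empty⟩
  | succ s ih =>
    obtain ⟨𝒞, h𝒞, rfl⟩ := ih (by omega)
    have hrest : (powersetCard r univ \ 𝒞).Nonempty := by
      rw [← card_pos, card_sdiff_of_subset fun s hs => mem_powersetCard_univ.2 (h𝒞.1 hs),
        card_powersetCard, card_univ, Fintype.card_fin]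
      omega
    obtain ⟨u, hu, hmin⟩ := exists_min_image _ toColex hrest
    obtain ⟨hur, hu𝒞⟩ := mem_sdiff.1 hu
    refine ⟨insert u 𝒞, ⟨fun t ht => ?_, fun t w ht hw => ?_⟩, card_insert_of_notMem hu𝒞⟩
    · obtain rfl | ht := mem_insert.1 ht
      exacts [mem_powersetCard_univ.1 hur, h𝒞.1 ht]
    obtain rfl | ht := mem_insert.1 ht
    · by_contra hw𝒞
      exact not_lt_of_ge (hmin w (mem_sdiff.2
        ⟨mem_powersetCard_univ.2 hw.2, fun h => hw𝒞 (mem_insert_of_mem h)⟩)) hw.1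
    · exact mem_insert_of_mem (h𝒞.2 ht hw)

lemma Colex.IsInitSeg.subset_powersetCard_erase_last {𝒞 : Finset (Finset (Fin (n + 1)))}
    (h𝒞 : IsInitSeg 𝒞 r) (hcard : #𝒞 ≤ n.choose r) :
    𝒞 ⊆ powersetCard r (univ.erase (Fin.last n)) := by
  intro s hs
  refine mem_powersetCard.2 ⟨fun a ha => mem_erase.2 ⟨fun hlast => ?_, mem_univ a⟩, h𝒞.1 hs⟩
  subst hlast
  -- otherwise `s` comes after all `r`-sets avoiding the last element
  have hbelow : powersetCard r (univ.erase (Fin.last n)) ⊆ 𝒞 := fun u hu => by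
    obtain ⟨hu, hur⟩ := mem_powersetCard.1 hu
    refine h𝒞.2 hs ⟨toColex_lt_toColex_iff_exists_forall_lt.2
      ⟨_, ha, fun h => (mem_erase.1 (hu h)).1 rfl, fun b hb _ => ?_⟩, hur⟩
    exact lt_of_le_of_ne (Fin.le_last b) (mem_erase.1 (hu hb)).1
  have hs' : s ∉ powersetCard r (univ.erase (Fin.last n)) := fun h =>
    (mem_erase.1 ((mem_powersetCard.1 h).1 ha)).1 rfl
  have := card_lt_card (ssubset_of_subset_of_ne hbelow fun h => hs' (h ▸ hs))
  rw [card_powersetCard, card_erase_of_mem (mem_univ _), card_univ, Fintype.card_fin,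
    Nat.add_sub_cancel] at this
  omega

lemma exists_subset_powersetCard_erase_last_card_shadow_le {K : Finset (Finset (Fin (n + 1)))}
    (hK : (K : Set (Finset (Fin (n + 1)))).Sized r) (hcard : #K ≤ n.choose r) :
    ∃ 𝒞 ⊆ powersetCard r (univ.erase (Fin.last n)), #𝒞 = #K ∧ #(∂ 𝒞) ≤ #(∂ K) := by
  obtain ⟨𝒞, h𝒞, h𝒞K⟩ := exists_isInitSeg_card_eq (n := n + 1) (r := r)
    (hcard.trans (Nat.choose_le_choose r n.le_succ))
  exact ⟨𝒞, h𝒞.subset_powersetCard_erase_last (h𝒞K ▸ hcard), h𝒞K, kruskal_katona hK h𝒞K.le h𝒞⟩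

theorem card_le_card_shadow_of_card_le_choose {K : Finset (Finset (Fin (2 * k + 2)))}
    (hK : (K : Set (Finset (Fin (2 * k + 2)))).Sized (k + 1))
    (hcard : #K ≤ (2 * k + 1).choose (k + 1)) : #K ≤ #(∂ K) := by
  obtain ⟨𝒞, h𝒞, h𝒞K, hshadow⟩ := exists_subset_powersetCard_erase_last_card_shadow_le hK hcard
  have hV : #(univ.erase (Fin.last (2 * k + 1))) = 2 * k + 1 := by simp
  exact h𝒞K ▸ (card_le_card_shadow_of_subset_powersetCard hV h𝒞).trans hshadow

theorem card_lt_card_shadow_of_card_lt_choose {K : Finset (Finset (Fin (2 * k + 2)))}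
    (hK : (K : Set (Finset (Fin (2 * k + 2)))).Sized (k + 1)) (hne : K.Nonempty)
    (hcard : #K < (2 * k + 1).choose (k + 1)) : #K < #(∂ K) := by
  obtain ⟨𝒞, h𝒞, h𝒞K, hshadow⟩ :=
    exists_subset_powersetCard_erase_last_card_shadow_le hK hcard.le
  have hV : #(univ.erase (Fin.last (2 * k + 1))) = 2 * k + 1 := by simp
  refine h𝒞K ▸ (card_lt_card_shadow_of_subset_powersetCard hV h𝒞 ?_ ?_).trans_le hshadow
  · rwa [← card_pos, h𝒞K, card_pos]
  · rintro rfl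
    rw [card_powersetCard, hV] at h𝒞K
    omega

end MiddleLayer

section LowerSlice

variable {α : Type*} [DecidableEq α] {𝒜 : Finset (Finset α)} {t : Finset α} {c : ℕ}

def lowerSlice (𝒜 : Finset (Finset α)) (c : ℕ) : Finset (Finset α) :=
  {s ∈ 𝒜 | #s ≠ c} ∪ ∂ (𝒜 # c)

lemma card_lt_of_mem_lowerSlice (h : ∀ s ∈ 𝒜, #s ≤ c) (ht : t ∈ lowerSlice 𝒜 c) : #t < c := by
  obtain ht | ht := mem_union.1 ht
  · exact (h t (mem_filter.1 ht).1).lt_of_ne (mem_filter.1 ht).2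
  · obtain ⟨s, hs, -, hcard⟩ := mem_shadow_iff_exists_mem_card_add_one.1 ht
    have := (mem_slice.1 hs).2
    omega

lemma exists_superset_of_mem_lowerSlice (ht : t ∈ lowerSlice 𝒜 c) : ∃ s ∈ 𝒜, t ⊆ s := by
  obtain ht | ht := mem_union.1 ht
  · exact ⟨t, (mem_filter.1 ht).1, subset_rfl⟩
  · obtain ⟨s, hs, hts⟩ := exists_subset_of_mem_shadow ht
    exact ⟨s, (mem_slice.1 hs).1, hts⟩

lemma isAntichain_lowerSlice (h𝒜 : IsAntichain (· ⊆ ·) (𝒜 : Set (Finset α)))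
    (h : ∀ s ∈ 𝒜, #s ≤ c) : IsAntichain (· ⊆ ·) (lowerSlice 𝒜 c : Set (Finset α)) := by
  have hshadow : ∀ t ∈ ∂ (𝒜 # c), ∃ s ∈ 𝒜, t ⊆ s ∧ #s = c ∧ #t + 1 = c := fun t ht => by
    obtain ⟨s, hs, hts, hcard⟩ := mem_shadow_iff_exists_mem_card_add_one.1 ht
    exact ⟨s, (mem_slice.1 hs).1, hts, (mem_slice.1 hs).2, hcard ▸ (mem_slice.1 hs).2⟩
  intro t₁ ht₁ t₂ ht₂ hne hsub
  have hlt := card_lt_card (ssubset_of_subset_of_ne hsub hne)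
  obtain ht₁ | ht₁ := mem_union.1 (mem_coe.1 ht₁) <;>
    obtain ht₂ | ht₂ := mem_union.1 (mem_coe.1 ht₂)
  · exact h𝒜 (mem_filter.1 ht₁).1 (mem_filter.1 ht₂).1 hne hsub
  · obtain ⟨s, hs, hts, hsc, -⟩ := hshadow t₂ ht₂
    exact h𝒜 (mem_filter.1 ht₁).1 hs (fun h => (mem_filter.1 ht₁).2 (h ▸ hsc)) (hsub.trans hts)
  · obtain ⟨-, -, -, -, hc⟩ := hshadow t₁ ht₁
    have := h t₂ (mem_filter.1 ht₂).1
    exact (mem_filter.1 ht₂).2 (by omega)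
  · obtain ⟨-, -, -, -, hc₁⟩ := hshadow t₁ ht₁
    obtain ⟨-, -, -, -, hc₂⟩ := hshadow t₂ ht₂
    omega

lemma card_lowerSlice_add (h𝒜 : IsAntichain (· ⊆ ·) (𝒜 : Set (Finset α))) :
    #(lowerSlice 𝒜 c) + #(𝒜 # c) = #𝒜 + #(∂ (𝒜 # c)) := by
  have hdisj : Disjoint {s ∈ 𝒜 | #s ≠ c} (∂ (𝒜 # c)) := disjoint_left.2 fun t ht ht' => by
    obtain ⟨s, hs, hts, hcard⟩ := mem_shadow_iff_exists_mem_card_add_one.1 ht'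
    exact h𝒜 (mem_filter.1 ht).1 (mem_slice.1 hs).1 (by rintro rfl; omega) hts
  rw [lowerSlice, card_union_of_disjoint hdisj, add_right_comm, slice,
    add_comm #{s ∈ 𝒜 | #s ≠ c}, card_filter_add_card_filter_not]

lemma card_slice_lt_card_shadow [Fintype α] (hc : Fintype.card α + 1 < 2 * c)
    (hne : (𝒜 # c).Nonempty) : #(𝒜 # c) < #(∂ (𝒜 # c)) := by
  have hlym := card_mul_le_card_shadow_mul (sized_slice (𝒜 := 𝒜) (r := c))
  obtain ⟨s, hs⟩ := hne
  have : c ≤ Fintype.card α := (mem_slice.1 hs).2 ▸ card_le_univ s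
  have hpos : 0 < #(𝒜 # c) := card_pos.2 ⟨s, hs⟩
  by_contra! hle
  have : Fintype.card α - c + 1 < c := by omega
  nlinarith

end LowerSlice

section Cointersecting

variable {α : Type*} [Fintype α] [DecidableEq α] {𝒜 ℬ : Finset (Finset α)} {s t : Finset α}
  {c k : ℕ}

def IsCointersecting (𝒜 : Finset (Finset α)) : Prop :=
  ∀ ⦃s⦄, s ∈ 𝒜 → ∀ ⦃t⦄, t ∈ 𝒜 → s ∪ t ≠ univ

lemma IsCointersecting.of_forall_exists_superset (h𝒜 : IsCointersecting 𝒜)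
    (h : ∀ t ∈ ℬ, ∃ s ∈ 𝒜, t ⊆ s) : IsCointersecting ℬ := by
  intro t₁ ht₁ t₂ ht₂ hunion
  obtain ⟨s₁, hs₁, hts₁⟩ := h t₁ ht₁
  obtain ⟨s₂, hs₂, hts₂⟩ := h t₂ ht₂
  exact h𝒜 hs₁ hs₂ (eq_univ_of_forall fun a => union_subset_union hts₁ hts₂ (hunion ▸ mem_univ a))

lemma IsCointersecting.compl_notMem_of_subset (h𝒜 : IsCointersecting 𝒜) (hs : s ∈ 𝒜)
    (hts : t ⊆ s) : tᶜ ∉ 𝒜 :=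
  fun h => h𝒜 hs h (eq_univ_of_forall fun a =>
    mem_union.2 ((em (a ∈ t)).imp (fun ha => hts ha) mem_compl.2))

lemma IsCointersecting.compl_notMem (h𝒜 : IsCointersecting 𝒜) (hs : s ∈ 𝒜) : sᶜ ∉ 𝒜 :=
  h𝒜.compl_notMem_of_subset hs subset_rfl

lemma isCointersecting_lowerSlice (h𝒜 : IsCointersecting 𝒜) :
    IsCointersecting (lowerSlice 𝒜 c) :=
  h𝒜.of_forall_exists_superset fun _ => exists_superset_of_mem_lowerSlice

lemma card_of_mem_compls_slice (hs : s ∈ (𝒜 # c)ᶜˢ) : #s = Fintype.card α - c := by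
  rw [← compl_compl s, card_compl, (mem_slice.1 (mem_compls.1 hs)).2]

lemma IsCointersecting.card_slice_le (hα : Fintype.card α = 2 * k + 2)
    (h𝒜 : IsCointersecting 𝒜) : #(𝒜 # (k + 1)) ≤ (2 * k + 1).choose (k + 1) := by
  have hdisj : Disjoint (𝒜 # (k + 1)) (𝒜 # (k + 1))ᶜˢ := disjoint_left.2 fun s hs hs' =>
    h𝒜.compl_notMem (mem_slice.1 hs).1 (mem_slice.1 (mem_compls.1 hs')).1
  have hsub : 𝒜 # (k + 1) ∪ (𝒜 # (k + 1))ᶜˢ ⊆ powersetCard (k + 1) univ := by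
    refine union_subset (fun s hs => mem_powersetCard_univ.2 (mem_slice.1 hs).2) fun s hs => ?_
    rw [mem_powersetCard_univ, card_of_mem_compls_slice hs, hα]
    omega
  have := card_le_card hsub
  rw [card_union_of_disjoint hdisj, card_compls, card_powersetCard, card_univ, hα,
    Nat.choose_two_mul_add_two] at this
  omega

theorem IsCointersecting.forall_card_eq_of_card_eq_choose (hα : Fintype.card α = 2 * k + 1)
    (h𝒜 : IsAntichain (· ⊆ ·) (𝒜 : Set (Finset α))) (hco : IsCointersecting 𝒜)
    (hcard : #𝒜 = (2 * k + 1).choose k) : ∀ s ∈ 𝒜, #s = k := by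
  have hchoose := h𝒜.choose_card_eq_of_forall_choose_le
    (fun s _ => by rw [hα]; exact (Nat.choose_le_middle _ _).trans_eq (by congr 1; omega))
    (hα ▸ hcard.ge)
  have hsizes : ∀ s ∈ 𝒜, #s = k ∨ #s = k + 1 := fun s hs =>
    Nat.eq_or_eq_add_one_of_choose_eq (hα ▸ card_le_univ s) (hα ▸ hchoose s hs)
  have hdisj : Disjoint (lowerSlice 𝒜 (k + 1)) (𝒜 # (k + 1))ᶜˢ := disjoint_left.2 fun u hu hu' => by
    obtain ⟨w, hw, huw⟩ := exists_superset_of_mem_lowerSlice hu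
    exact hco.compl_notMem_of_subset hw huw (mem_slice.1 (mem_compls.1 hu')).1
  have hsub : lowerSlice 𝒜 (k + 1) ∪ (𝒜 # (k + 1))ᶜˢ ⊆ powersetCard k univ := by
    refine union_subset (fun u hu => mem_powersetCard_univ.2 ?_) fun u hu => ?_
    · obtain hu | hu := mem_union.1 hu
      · exact (hsizes u (mem_filter.1 hu).1).resolve_right (mem_filter.1 hu).2
      · exact Set.Sized.shadow (sized_slice (𝒜 := 𝒜)) hu
    · rw [mem_powersetCard_univ, card_of_mem_compls_slice hu, hα]
      omega
  have hle := card_le_card hsub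
  rw [card_union_of_disjoint hdisj, card_compls, card_powersetCard, card_univ, hα, ← hcard]
    at hle
  have hshadow : ∂ (𝒜 # (k + 1)) = ∅ :=
    card_eq_zero.1 (by have := card_lowerSlice_add (c := k + 1) h𝒜; omega)
  intro s hs
  refine (hsizes s hs).resolve_right fun h => ?_
  obtain ⟨a, ha⟩ := card_pos.1 (by rw [h]; exact k.succ_pos)
  exact notMem_empty _ (hshadow ▸ erase_mem_shadow (mem_slice.2 ⟨hs, h⟩) ha)

lemma card_add_card_shadow_slice_le (hα : Fintype.card α = 2 * k + 2)
    (h𝒜 : IsAntichain (· ⊆ ·) (𝒜 : Set (Finset α))) (h : ∀ s ∈ 𝒜, #s ≤ k + 1) :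
    #𝒜 + #(∂ (𝒜 # (k + 1))) ≤ (2 * k + 2).choose k + #(𝒜 # (k + 1)) := by
  have hlym := (isAntichain_lowerSlice h𝒜 h).card_le_of_forall_choose_le
    (b := (2 * k + 2).choose k) fun s hs => by
      have := card_lt_of_mem_lowerSlice h hs
      rw [hα]
      exact (Nat.choose_strictMonoOn _).monotoneOn (by simp; omega) (by simp) (by omega)
  have := card_lowerSlice_add (c := k + 1) h𝒜
  omega

theorem IsCointersecting.card_le_choose {𝒜 : Finset (Finset (Fin (2 * k + 2)))}
    (h𝒜 : IsAntichain (· ⊆ ·) (𝒜 : Set (Finset (Fin (2 * k + 2))))) (hco : IsCointersecting 𝒜) :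
    #𝒜 ≤ (2 * k + 2).choose k := by
  have hα : Fintype.card (Fin (2 * k + 2)) = 2 * k + 2 := Fintype.card_fin _
  suffices ∀ c ≥ k + 1, ∀ ℬ : Finset (Finset (Fin (2 * k + 2))),
      IsAntichain (· ⊆ ·) (ℬ : Set (Finset (Fin (2 * k + 2)))) → IsCointersecting ℬ →
      (∀ s ∈ ℬ, #s ≤ c) → #ℬ ≤ (2 * k + 2).choose k from
    this _ (by omega : k + 1 ≤ 2 * k + 2) 𝒜 h𝒜 hco fun s _ => (card_le_univ s).trans_eq hα
  intro c hc
  induction c, hc using Nat.le_induction with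
  | base =>
    intro ℬ hℬ hco h
    have := card_add_card_shadow_slice_le hα hℬ h
    have := card_le_card_shadow_of_card_le_choose (sized_slice (𝒜 := ℬ)) (hco.card_slice_le hα)
    omega
  | succ c hc ih =>
    intro ℬ hℬ hco h
    have hpush : #ℬ ≤ #(lowerSlice ℬ (c + 1)) := by
      have := card_lowerSlice_add (c := c + 1) hℬ
      obtain hK | hK := (ℬ # (c + 1)).eq_empty_or_nonempty
      · rw [hK, shadow_empty, card_empty] at this
        omega
      · have := card_slice_lt_card_shadow (by rw [hα]; omega) hK
        omega
    exact hpush.trans (ih _ (isAntichain_lowerSlice hℬ h) (isCointersecting_lowerSlice hco)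
      fun s hs => Nat.le_of_lt_succ (card_lt_of_mem_lowerSlice h hs))

theorem IsCointersecting.forall_card_eq_of_card_slice_lt {𝒜 : Finset (Finset (Fin (2 * k + 2)))}
    (h𝒜 : IsAntichain (· ⊆ ·) (𝒜 : Set (Finset (Fin (2 * k + 2))))) (hco : IsCointersecting 𝒜)
    (hcard : #𝒜 = (2 * k + 2).choose k) (hK : #(𝒜 # (k + 1)) < (2 * k + 1).choose (k + 1)) :
    ∀ s ∈ 𝒜, #s = k := by
  have hα : Fintype.card (Fin (2 * k + 2)) = 2 * k + 2 := Fintype.card_fin _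
  have hle : ∀ s ∈ 𝒜, #s ≤ k + 1 := by
    by_contra! ⟨s, hs, hsk⟩
    obtain ⟨u, hu, hmax⟩ := exists_max_image 𝒜 card ⟨s, hs⟩
    have := card_lowerSlice_add (c := #u) h𝒜
    have := card_slice_lt_card_shadow (by rw [hα]; have := hmax s hs; omega)
      ⟨u, mem_slice.2 ⟨hu, rfl⟩⟩
    have := (isCointersecting_lowerSlice (c := #u) hco).card_le_choose
      (isAntichain_lowerSlice h𝒜 hmax)
    omega
  have hmid : 𝒜 # (k + 1) = ∅ := by
    by_contra! hne
    have := card_lt_card_shadow_of_card_lt_choose (sized_slice (𝒜 := 𝒜)) hne hK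
    have := card_add_card_shadow_slice_le hα h𝒜 hle
    omega
  have hlek : ∀ s ∈ 𝒜, #s ≤ k := fun s hs => Nat.le_of_lt_succ ((hle s hs).lt_of_ne fun h =>
    notMem_empty s (hmid ▸ mem_slice.2 ⟨hs, h⟩))
  have hchoose := h𝒜.choose_card_eq_of_forall_choose_le (b := (2 * k + 2).choose k)
    (fun s hs => by
      rw [hα]
      exact (Nat.choose_strictMonoOn _).monotoneOn (by simp; have := hlek s hs; omega) (by simp)
        (hlek s hs)) hcard.ge
  intro s hs
  rw [hα] at hchoose
  exact (Nat.choose_strictMonoOn _).injOn (by simp; have := hlek s hs; omega) (by simp)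
    (hchoose s hs)

end Cointersecting

lemma card_filter_card_fiber_eq_le {α β : Type*} [Fintype α] [DecidableEq β] (f : α → β)
    {k : ℕ} (hk : Fintype.card α < 2 * k) : #{a | #{b | f b = f a} = k} ≤ k := by
  obtain h | ⟨a, ha⟩ := ({a | #{b | f b = f a} = k} : Finset α).eq_empty_or_nonempty
  · simp [h]
  refine (card_le_card fun b hb => mem_filter.2 ⟨mem_univ b, ?_⟩).trans (mem_filter.1 ha).2.le
  -- two different fibres of size `k` do not fit into `α`
  by_contra hba
  have hdisj : Disjoint ({x | f x = f a} : Finset α) ({x | f x = f b} : Finset α) :=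
    disjoint_filter.2 fun x _ hxa hxb => hba (hxb.symm.trans hxa)
  have := card_le_univ (disjUnion _ _ hdisj)
  rw [card_disjUnion, (mem_filter.1 ha).2, (mem_filter.1 hb).2] at this
  omega

end Finset

theorem IsCoveringArray.exists_row {m n q : ℕ} {C : Fin m → Fin n → Fin q}
    (hC : IsCoveringArray m n q 2 C) {i j : Fin n} (hij : i ≠ j) (a b : Fin q) :
    ∃ r, C r i = a ∧ C r j = b := by
  obtain ⟨r, hr⟩ := hC ![i, j] (by
    intro x y; fin_cases x <;> fin_cases y <;> simp [hij, hij.symm]) ![a, b]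
  exact ⟨r, hr 0, hr 1⟩

section AgreeSet

variable {n N : ℕ}

def agreeSet (C : Fin (n + 1) → Fin N → Fin 2) (v : Fin (n + 1)) (i : Fin N) : Finset (Fin n) :=
  {x | C (v.succAbove x) i = C v i}

variable {C : Fin (n + 1) → Fin N → Fin 2} {v : Fin (n + 1)} {i j : Fin N}

@[simp] lemma mem_agreeSet {x : Fin n} : x ∈ agreeSet C v i ↔ C (v.succAbove x) i = C v i := by
  simp [agreeSet]

lemma card_agreeSet_add_one : #(agreeSet C v i) + 1 = #{u | C u i = C v i} := by
  rw [card_filter, Fin.sum_univ_succAbove _ v, agreeSet, card_filter, if_pos rfl, add_comm]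

lemma IsCoveringArray.exists_succAbove (hC : IsCoveringArray (n + 1) N 2 2 C) (hij : i ≠ j)
    (a : Fin 2) {b : Fin 2} (hb : b ≠ C v j) :
    ∃ x, C (v.succAbove x) i = a ∧ C (v.succAbove x) j = b := by
  obtain ⟨r, hri, hrj⟩ := hC.exists_row hij a b
  obtain ⟨x, rfl⟩ := Fin.exists_succAbove_eq (x := r) (y := v) (by rintro rfl; exact hb hrj.symm)
  exact ⟨x, hri, hrj⟩

lemma IsCoveringArray.not_agreeSet_subset (hC : IsCoveringArray (n + 1) N 2 2 C) (hij : i ≠ j) :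
    ¬ agreeSet C v i ⊆ agreeSet C v j := fun h => by
  obtain ⟨b, hb⟩ := exists_ne (C v j)
  obtain ⟨x, hxi, hxj⟩ := hC.exists_succAbove hij (C v i) hb
  exact hb (hxj ▸ mem_agreeSet.1 (h (mem_agreeSet.2 hxi)))

lemma IsCoveringArray.agreeSet_injective (hC : IsCoveringArray (n + 1) N 2 2 C) :
    Function.Injective (agreeSet C v) := fun i j h => by
  by_contra hij
  exact hC.not_agreeSet_subset hij h.le

lemma IsCoveringArray.isAntichain_image_agreeSet (hC : IsCoveringArray (n + 1) N 2 2 C) :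
    IsAntichain (· ⊆ ·) ((univ.image (agreeSet C v) : Finset (Finset (Fin n))) :
      Set (Finset (Fin n))) := by
  rintro _ hs _ ht hne hst
  obtain ⟨i, -, rfl⟩ := mem_image.1 (mem_coe.1 hs)
  obtain ⟨j, -, rfl⟩ := mem_image.1 (mem_coe.1 ht)
  exact hC.not_agreeSet_subset (fun h => hne (by rw [h])) hst

lemma IsCoveringArray.isCointersecting_image_agreeSet (hC : IsCoveringArray (n + 1) N 2 2 C)
    [Nontrivial (Fin N)] : (univ.image (agreeSet C v)).IsCointersecting := by
  have hdisagree : ∀ i j : Fin N, i ≠ j → ∃ x, x ∉ agreeSet C v i ∧ x ∉ agreeSet C v j := by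
    intro i j hij
    obtain ⟨a, ha⟩ := exists_ne (C v i)
    obtain ⟨b, hb⟩ := exists_ne (C v j)
    obtain ⟨x, hxi, hxj⟩ := hC.exists_succAbove hij a hb
    exact ⟨x, by simp [hxi, ha], by simp [hxj, hb]⟩
  rintro _ hs _ ht hunion
  obtain ⟨i, -, rfl⟩ := mem_image.1 hs
  obtain ⟨j, -, rfl⟩ := mem_image.1 ht
  obtain ⟨x, hxi, hxj⟩ : ∃ x, x ∉ agreeSet C v i ∧ x ∉ agreeSet C v j := by
    obtain rfl | hij := eq_or_ne i j
    · obtain ⟨j, hj⟩ := exists_ne i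
      obtain ⟨x, hx, -⟩ := hdisagree i j hj.symm
      exact ⟨x, hx, hx⟩
    · exact hdisagree i j hij
  exact notMem_union.2 ⟨hxi, hxj⟩ (hunion ▸ mem_univ x)

theorem IsCoveringArray.card_agreeSet_of_even {k : ℕ} {C : Fin (2 * k + 2) → Fin N → Fin 2}
    (hC : IsCoveringArray (2 * k + 2) N 2 2 C) (hN : N = (2 * k + 1).choose k) (hk : 1 ≤ k)
    (v : Fin (2 * k + 2)) (i : Fin N) : #(agreeSet C v i) = k := by
  have : Nontrivial (Fin N) := Fin.nontrivial_iff_two_le.2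
    (by have := Nat.le_choose_of_one_le_of_le_half (n := 2 * k + 1) hk (by omega); omega)
  refine hC.isCointersecting_image_agreeSet.forall_card_eq_of_card_eq_choose (by simp)
    hC.isAntichain_image_agreeSet ?_ _ (mem_image_of_mem _ (mem_univ i))
  rw [card_image_of_injective _ hC.agreeSet_injective, card_univ, Fintype.card_fin, hN]

theorem IsCoveringArray.exists_card_agreeSet_of_odd {k : ℕ}
    {C : Fin (2 * k + 3) → Fin N → Fin 2} (hC : IsCoveringArray (2 * k + 3) N 2 2 C)
    (hN : N = (2 * k + 2).choose k) (hk : 1 ≤ k) : ∃ v, ∀ i, #(agreeSet C v i) = k := by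
  have : Nontrivial (Fin N) := Fin.nontrivial_iff_two_le.2
    (by have := Nat.le_choose_of_one_le_of_le_half (n := 2 * k + 2) hk (by omega); omega)
  have hcard : ∀ v, #(univ.image (agreeSet C v)) = (2 * k + 2).choose k := fun v => by
    rw [card_image_of_injective _ hC.agreeSet_injective, card_univ, Fintype.card_fin, hN]
  have hslice : ∀ v,
      #((univ.image (agreeSet C v)) # (k + 1)) = #{i | #(agreeSet C v i) = k + 1} :=
    fun v => by rw [slice, filter_image, card_image_of_injective _ hC.agreeSet_injective]
  suffices ∃ v, #{i | #(agreeSet C v i) = k + 1} < (2 * k + 1).choose (k + 1) by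
    obtain ⟨v, hv⟩ := this
    exact ⟨v, fun i => hC.isCointersecting_image_agreeSet.forall_card_eq_of_card_slice_lt
      hC.isAntichain_image_agreeSet (hcard v) (hslice v ▸ hv) _ (mem_image_of_mem _ (mem_univ i))⟩
  by_contra! hall
  -- a column has at most one class of `k + 2` rows
  have hcol : ∀ i, #{v | #(agreeSet C v i) = k + 1} ≤ k + 2 := fun i =>
    calc #{v | #(agreeSet C v i) = k + 1} = #{v | #{u | C u i = C v i} = k + 2} := by
          congr 1
          exact filter_congr fun v _ => by rw [← card_agreeSet_add_one]; omega
      _ ≤ k + 2 := card_filter_card_fiber_eq_le (C · i) (by simp; omega)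
  have hid := Nat.choose_succ_right_eq (2 * k + 2) k
  rw [Nat.choose_two_mul_add_two, show 2 * k + 2 - k = k + 2 by omega, ← hN] at hid
  have hcount : (2 * k + 3) * (2 * k + 1).choose (k + 1) ≤
      (2 * k + 2) * (2 * k + 1).choose (k + 1) :=
    calc (2 * k + 3) * (2 * k + 1).choose (k + 1)
        = ∑ _v : Fin (2 * k + 3), (2 * k + 1).choose (k + 1) := by simp
      _ ≤ ∑ v, #{i | #(agreeSet C v i) = k + 1} := sum_le_sum fun v _ => hall v
      _ = ∑ i, #{v | #(agreeSet C v i) = k + 1} := by simp only [card_filter]; exact sum_comm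
      _ ≤ ∑ _i : Fin N, (k + 2) := sum_le_sum fun i _ => hcol i
      _ = (2 * k + 2) * (2 * k + 1).choose (k + 1) := by
        rw [sum_const, card_univ, Fintype.card_fin, smul_eq_mul, ← hid]
        ring
  have := Nat.le_of_mul_le_mul_right hcount (Nat.choose_pos (by omega))
  omega

theorem IsCoveringArray.exists_card_agreeSet (hn : 3 ≤ n) (hC : IsCoveringArray (n + 1) N 2 2 C)
    (hN : N = n.choose ((n + 1) / 2 - 1)) : ∃ v, ∀ i, #(agreeSet C v i) = (n + 1) / 2 - 1 := by
  rcases Nat.even_or_odd n with ⟨j, hj⟩ | ⟨k, rfl⟩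
  · obtain ⟨k, rfl⟩ : ∃ k, n = 2 * k + 2 := ⟨j - 1, by omega⟩
    rw [show (2 * k + 2 + 1) / 2 - 1 = k by omega] at hN ⊢
    exact hC.exists_card_agreeSet_of_odd hN (by omega)
  · rw [show (2 * k + 1 + 1) / 2 - 1 = k by omega] at hN ⊢
    exact ⟨0, hC.card_agreeSet_of_even hN (by omega) 0⟩

lemma Fin.eq_swap_apply_of_iff {a b c d : Fin 2} (h : a = b ↔ c = d) :
    a = Equiv.swap d b c := by
  revert a b c d
  decide

lemma exists_perm_eq_comp_of_range_eq {ι β : Type*} {f g : ι → β} (hf : Function.Injective f)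
    (hg : Function.Injective g) (h : Set.range g = Set.range f) :
    ∃ τ : Equiv.Perm ι, ∀ i, g i = f (τ i) :=
  ⟨(Equiv.ofInjective g hg).trans ((Equiv.setCongr h).trans (Equiv.ofInjective f hf).symm),
    fun i => by simp [Equiv.apply_ofInjective_symm]⟩

lemma range_agreeSet {k : ℕ} (hC : Function.Injective (agreeSet C v))
    (hk : ∀ i, #(agreeSet C v i) = k) (hN : N = n.choose k) :
    Set.range (agreeSet C v) = (powersetCard k univ : Finset (Finset (Fin n))) := by
  have himage : univ.image (agreeSet C v) = powersetCard k univ :=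
    eq_of_subset_of_card_le (fun s hs => by
      obtain ⟨i, -, rfl⟩ := mem_image.1 hs
      exact mem_powersetCard_univ.2 (hk i))
      (by rw [card_image_of_injective _ hC, card_powersetCard, card_univ, card_univ,
        Fintype.card_fin, Fintype.card_fin, hN])
  rw [← himage, coe_image, coe_univ, Set.image_univ]

theorem caEquiv_of_agreeSet {k : ℕ} {X : Fin (n + 1) → Fin N → Fin 2} {w : Fin (n + 1)}
    (hC : Function.Injective (agreeSet C v)) (hX : Function.Injective (agreeSet X w))
    (hCk : ∀ i, #(agreeSet C v i) = k) (hXk : ∀ i, #(agreeSet X w i) = k)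
    (hN : N = n.choose k) : CAEquiv C X := by
  obtain ⟨τ, hτ⟩ := exists_perm_eq_comp_of_range_eq hC hX
    ((range_agreeSet hX hXk hN).trans (range_agreeSet hC hCk hN).symm)
  let σ : Equiv.Perm (Fin (n + 1)) := (finSuccEquiv' w).trans (finSuccEquiv' v).symm
  refine ⟨σ, τ, fun i => Equiv.swap (C v (τ i)) (X w i), fun r i => ?_⟩
  induction r using Fin.succAboveCases w with
  | x => simp [σ]
  | p x =>
    have hx : X (w.succAbove x) i = X w i ↔ C (v.succAbove x) (τ i) = C v (τ i) := by
      rw [← mem_agreeSet, ← mem_agreeSet, hτ]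
    simp only [σ, Equiv.trans_apply, finSuccEquiv'_succAbove, finSuccEquiv'_symm_some]
    exact Fin.eq_swap_apply_of_iff hx

end AgreeSet

section Standard

variable {n : ℕ} {S : Fin (n + 1) → Fin ((n + 1 - 1).choose ((n + 1) / 2 - 1)) → Fin 2}

lemma Fin.eq_of_eq_one_iff {a b : Fin 2} (h : a = 1 ↔ b = 1) : a = b := by
  revert a b
  decide

lemma IsStandardMaxArray.agreeSet_zero (hS : IsStandardMaxArray (n + 1) S) (i) :
    agreeSet S 0 i = ({x | S x.succ i = 1} : Finset (Fin n)) := by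
  ext x
  simp [hS.1 0 i rfl]

lemma IsStandardMaxArray.agreeSet_injective (hS : IsStandardMaxArray (n + 1) S) :
    Function.Injective (agreeSet S 0) := fun i j h => by
  rw [hS.agreeSet_zero, hS.agreeSet_zero] at h
  refine hS.2.1 (funext fun r => ?_)
  show S r i = S r j
  induction r using Fin.cases with
  | zero => rw [hS.1 0 i rfl, hS.1 0 j rfl]
  | succ x => exact Fin.eq_of_eq_one_iff (by simpa using congrArg (x ∈ ·) h)

lemma IsStandardMaxArray.card_agreeSet (hS : IsStandardMaxArray (n + 1) S) (i) :
    #(agreeSet S 0 i) = (n + 1) / 2 - 1 := by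
  have := hS.2.2 i
  rw [Fin.card_filter_univ_succ'] at this
  simpa [hS.agreeSet_zero] using this

end Standard

/-- for `m ≥ 4`, every binary 2-covering array of size `m` and maximal degree
`binom(m-1, ⌊m/2⌋-1)` is equivalent to the standard maximal binary 2-covering array of size
`m`; in particular any two such maximal arrays are equivalent. -/
theorem maximal_unique (m : ℕ) (hm : 4 ≤ m)
    (C : Fin m → Fin ((m-1).choose (m/2 - 1)) → Fin 2)
    (hC : IsCoveringArray m ((m-1).choose (m/2 - 1)) 2 2 C) :
    (∀ S : Fin m → Fin ((m-1).choose (m/2 - 1)) → Fin 2,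
      IsStandardMaxArray m S → CAEquiv C S) ∧
    (∀ C' : Fin m → Fin ((m-1).choose (m/2 - 1)) → Fin 2,
      IsCoveringArray m ((m-1).choose (m/2 - 1)) 2 2 C' → CAEquiv C C') := by
  obtain ⟨n, rfl⟩ : ∃ n, m = n + 1 := ⟨m - 1, by omega⟩
  obtain ⟨v, hv⟩ := hC.exists_card_agreeSet (by omega) rfl
  refine ⟨fun S hS => ?_, fun C' hC' => ?_⟩
  · exact caEquiv_of_agreeSet hC.agreeSet_injective hS.agreeSet_injective hv hS.card_agreeSet rfl
  · obtain ⟨w, hw⟩ := hC'.exists_card_agreeSet (by omega) rfl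
    exact caEquiv_of_agreeSet hC.agreeSet_injective hC'.agreeSet_injective hv hw rfl
end

section
/- Let m ≥ 5 and let C be a 2m × (n+1) binary 3-covering array, where binom(m−1, ⌊m/2⌋−1) + m − 3⌊m/2⌋ < n ≤ binom(m−1, ⌊m/2⌋−1). Then every column c^i of C has weight wt(c^i) = m, and for any two distinct columns c^i and c^j of C the Hamming distance satisfies d(c^i, c^j) = 2⌊m/2⌋ or d(c^i, c^j) = 2⌈m/2⌉. -/
/-!
Fix a column `i` and a symbol `ε`. The rows carrying `ε` in column `i`, restricted to the other
`n` columns, form a binary 2-covering array, so the `2n` column fibers `{r | c^j_r = b}` are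
subsets of these rows none of which contains another. Sperner's theorem then bounds `2n` by the
central binomial coefficient of the number of such rows, which forces at least `m` rows for each
`ε`; as the two values of `ε` split `2m` rows, every column has weight `m`.

For the distances take `ε = 1`, so that there are `m` rows, and pick in every other column the
fiber with at most `⌊m/2⌋` elements. These `n` sets form an intersecting antichain. Pushing it up
to level `⌊m/2⌋` by upper shadows never loses members below the middle layer, and the last step
gains at least `m - ⌊m/2⌋` sets as soon as some member is smaller than `⌊m/2⌋`; Erdős–Ko–Rado
bounds the final layer by `binom(m-1, ⌊m/2⌋-1)`, which the lower bound on `n` does not allow.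
Hence column `j` shares exactly `⌊m/2⌋` or `⌈m/2⌉` ones with column `i`, which fixes the distance.
-/

open Finset
open scoped FinsetFamily

namespace Finset

variable {α : Type*} [DecidableEq α] {𝒜 : Finset (Finset α)} {s : Finset α} {r : ℕ}

theorem card_mul_le_card_shadow_mul_of_subset (h𝒜s : ∀ B ∈ 𝒜, B ⊆ s)
    (h𝒜 : (𝒜 : Set (Finset α)).Sized r) : #𝒜 * r ≤ #(∂ 𝒜) * (#s - r + 1) := by
  refine card_mul_le_card_mul' (· ⊆ ·) (fun B hB => ?_) (fun D hD => ?_)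
  · rw [← h𝒜 hB, ← card_image_of_injOn B.erase_injOn]
    refine card_le_card ?_
    simp_rw [image_subset_iff, mem_bipartiteBelow]
    exact fun a ha => ⟨erase_mem_shadow hB ha, erase_subset _ _⟩
  · obtain ⟨B₀, hB₀, hDB₀, hcard⟩ := mem_shadow_iff_exists_mem_card_add_one.1 hD
    refine le_trans ?_ (tsub_tsub_le_tsub_add (b := r) (c := 1))
    rw [← h𝒜.shadow hD, ← card_sdiff_of_subset (hDB₀.trans (h𝒜s B₀ hB₀)),
      ← card_image_of_injOn ((insert_inj_on D).mono fun a ha => (mem_sdiff.1 ha).2)]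
    refine card_le_card fun B hB => ?_
    rw [mem_bipartiteAbove] at hB
    obtain ⟨a, ha, rfl⟩ := exists_eq_insert_iff.2 ⟨hB.2, by rw [h𝒜 hB.1, ← h𝒜 hB₀, hcard]⟩
    exact mem_image_of_mem _ (mem_sdiff.2 ⟨h𝒜s _ hB.1 (mem_insert_self a D), ha⟩)

theorem card_le_card_shadow_of_subset (h𝒜s : ∀ B ∈ 𝒜, B ⊆ s)
    (h𝒜 : (𝒜 : Set (Finset α)).Sized r) (hr : #s + 1 ≤ 2 * r) : #𝒜 ≤ #(∂ 𝒜) := by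
  refine Nat.le_of_mul_le_mul_right ?_ (by omega : 0 < r)
  calc #𝒜 * r ≤ #(∂ 𝒜) * (#s - r + 1) := card_mul_le_card_shadow_mul_of_subset h𝒜s h𝒜
    _ ≤ #(∂ 𝒜) * r := Nat.mul_le_mul_left _ (by omega)

theorem le_card_shadow_of_nonempty (h𝒜 : (𝒜 : Set (Finset α)).Sized r) (hne : 𝒜.Nonempty) :
    r ≤ #(∂ 𝒜) := by
  obtain ⟨B, hB⟩ := hne
  calc r = #(B.image B.erase) := by rw [card_image_of_injOn B.erase_injOn, h𝒜 hB]
    _ ≤ #(∂ 𝒜) := card_le_card <| image_subset_iff.2 fun a ha => erase_mem_shadow hB ha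

theorem notMem_of_mem_shadow {a : α} (h𝒜 : ∀ B ∈ 𝒜, a ∉ B) {D : Finset α} (hD : D ∈ ∂ 𝒜) :
    a ∉ D := fun haD => by
  obtain ⟨B, hB, hDB⟩ := exists_subset_of_mem_shadow hD
  exact h𝒜 B hB (hDB haD)

theorem memberSubfamily_subset_shadow (a : α) (𝒜 : Finset (Finset α)) :
    𝒜.memberSubfamily a ⊆ ∂ 𝒜 := fun C hC => by
  rw [mem_memberSubfamily] at hC
  simpa [erase_insert hC.2] using erase_mem_shadow hC.1 (mem_insert_self a C)

theorem image_insert_shadow_memberSubfamily_subset (a : α) (𝒜 : Finset (Finset α)) :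
    (∂ (𝒜.memberSubfamily a)).image (insert a) ⊆ ∂ 𝒜 := by
  refine image_subset_iff.2 fun D hD => ?_
  obtain ⟨C, hC, x, hx, rfl⟩ := mem_shadow_iff.1 hD
  rw [mem_memberSubfamily] at hC
  rw [← erase_insert_of_ne (ne_of_mem_of_not_mem hx hC.2).symm]
  exact erase_mem_shadow hC.1 (mem_insert_of_mem hx)

theorem card_union_image_insert {a : α} {𝒳 𝒴 : Finset (Finset α)} (h𝒳 : ∀ X ∈ 𝒳, a ∉ X)
    (h𝒴 : ∀ Y ∈ 𝒴, a ∉ Y) : #(𝒳 ∪ 𝒴.image (insert a)) = #𝒳 + #𝒴 := by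
  rw [card_union_of_disjoint, card_image_of_injOn]
  · intro Y hY Y' hY' h
    rw [← erase_insert (h𝒴 Y hY), ← erase_insert (h𝒴 Y' hY')]
    exact congrArg (erase · a) h
  · refine disjoint_left.2 fun X hX hX' => ?_
    obtain ⟨Y, -, rfl⟩ := mem_image.1 hX'
    exact h𝒳 _ hX (mem_insert_self a Y)

/- Induction on the ground set `s = insert a s'`. Writing `𝒜₀` for the members avoiding `a` and
`𝒞` for the members through `a` with `a` removed, `∂ 𝒜` contains the disjoint union of `∂ 𝒜₀`
(or of `𝒞`) and `insert a '' ∂ 𝒞`; local LYM gives `#𝒞 ≤ #(∂ 𝒞)`, and the induction hypothesis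
supplies the gain on `𝒜₀`. -/
theorem card_add_le_card_shadow_of_subset (h𝒜s : ∀ B ∈ 𝒜, B ⊆ s)
    (h𝒜 : (𝒜 : Set (Finset α)).Sized r) (hne : 𝒜.Nonempty) (hr : #s + 2 ≤ 2 * r) :
    #𝒜 + (r - 1) ≤ #(∂ 𝒜) := by
  induction s using Finset.induction_on generalizing 𝒜 with
  | empty =>
    obtain ⟨B, hB⟩ := hne
    have := h𝒜 hB
    rw [subset_empty.1 (h𝒜s B hB), card_empty] at this
    rw [card_empty] at hr
    omega
  | insert a s ha ih =>
    rw [card_insert_of_notMem ha] at hr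
    set 𝒜₀ := 𝒜.nonMemberSubfamily a
    set 𝒞 := 𝒜.memberSubfamily a
    have h𝒜₀s : ∀ B ∈ 𝒜₀, B ⊆ s := fun B hB => by
      rw [mem_nonMemberSubfamily] at hB
      exact (subset_insert_iff_of_notMem hB.2).1 (h𝒜s B hB.1)
    have h𝒞s : ∀ C ∈ 𝒞, C ⊆ s := fun C hC => by
      rw [mem_memberSubfamily] at hC
      exact (subset_insert_iff_of_notMem hC.2).1 ((subset_insert a C).trans (h𝒜s _ hC.1))
    have h𝒞 : (𝒞 : Set (Finset α)).Sized (r - 1) := fun C hC => by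
      rw [mem_coe, mem_memberSubfamily] at hC
      have := h𝒜 hC.1
      rw [card_insert_of_notMem hC.2] at this
      omega
    have h𝒞a : ∀ C ∈ 𝒞, a ∉ C := fun C hC => (mem_memberSubfamily.1 hC).2
    have hsplit : #𝒞 + #𝒜₀ = #𝒜 := card_memberSubfamily_add_card_nonMemberSubfamily a 𝒜
    have hlift := image_insert_shadow_memberSubfamily_subset a 𝒜
    rcases 𝒜₀.eq_empty_or_nonempty with h₀ | h₀
    · rw [h₀, card_empty, add_zero] at hsplit
      have := le_card_shadow_of_nonempty h𝒞 (by rw [← card_pos, hsplit]; exact hne.card_pos)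
      calc #𝒜 + (r - 1) ≤ #𝒞 + #(∂ 𝒞) := by omega
        _ = #(𝒞 ∪ (∂ 𝒞).image (insert a)) :=
          (card_union_image_insert h𝒞a fun _ => notMem_of_mem_shadow h𝒞a).symm
        _ ≤ #(∂ 𝒜) := card_le_card (union_subset (memberSubfamily_subset_shadow a 𝒜) hlift)
    · have := ih h𝒜₀s (h𝒜.mono (filter_subset _ _)) h₀ (by omega)
      have := card_le_card_shadow_of_subset h𝒞s h𝒞 (by omega)
      calc #𝒜 + (r - 1) ≤ #(∂ 𝒜₀) + #(∂ 𝒞) := by omega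
        _ = #(∂ 𝒜₀ ∪ (∂ 𝒞).image (insert a)) :=
          (card_union_image_insert (fun _ => notMem_of_mem_shadow fun B hB =>
            (mem_nonMemberSubfamily.1 hB).2) fun _ => notMem_of_mem_shadow h𝒞a).symm
        _ ≤ #(∂ 𝒜) := card_le_card (union_subset (shadow_mono (filter_subset _ _)) hlift)

section Fintype

variable [Fintype α]

theorem card_le_card_upShadow (h𝒜 : (𝒜 : Set (Finset α)).Sized r)
    (hr : 2 * r + 1 ≤ Fintype.card α) : #𝒜 ≤ #(∂⁺ 𝒜) := by
  rw [← card_compls 𝒜, ← card_compls (∂⁺ 𝒜), ← shadow_compls]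
  exact card_le_card_shadow_of_subset (s := univ) (fun _ _ => subset_univ _) h𝒜.compls
    (by rw [card_univ]; omega)

theorem card_add_le_card_upShadow (h𝒜 : (𝒜 : Set (Finset α)).Sized r) (hne : 𝒜.Nonempty)
    (hr : 2 * r + 2 ≤ Fintype.card α) : #𝒜 + (Fintype.card α - r - 1) ≤ #(∂⁺ 𝒜) := by
  rw [← card_compls 𝒜, ← card_compls (∂⁺ 𝒜), ← shadow_compls]
  exact card_add_le_card_shadow_of_subset (s := univ) (fun _ _ => subset_univ _) h𝒜.compls
    (compls_nonempty.2 hne) (by rw [card_univ]; omega)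

def rising (k : ℕ) (𝒜 : Finset (Finset α)) : Finset (Finset α) :=
  {B ∈ powersetCard k univ | ∃ A ∈ 𝒜, A ⊆ B}

variable {k : ℕ} {B : Finset α}

theorem mem_rising : B ∈ rising k 𝒜 ↔ (∃ A ∈ 𝒜, A ⊆ B) ∧ #B = k := by
  simp [rising, and_comm]

theorem sized_rising : (rising k 𝒜 : Set (Finset α)).Sized k := fun _ hB => (mem_rising.1 hB).2

theorem rising_succ : rising (k + 1) 𝒜 = 𝒜 # (k + 1) ∪ ∂⁺ (rising k 𝒜) := by
  ext B
  simp only [mem_union, mem_slice, mem_rising, mem_upShadow_iff_erase_mem]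
  constructor
  · rintro ⟨⟨A, hA, hAB⟩, hB⟩
    by_cases hAB' : A = B
    · exact Or.inl ⟨hAB' ▸ hA, hB⟩
    obtain ⟨x, hxB, hxA⟩ := exists_of_ssubset (ssubset_of_subset_of_ne hAB hAB')
    refine Or.inr ⟨x, hxB, ⟨A, hA, subset_erase.2 ⟨hAB, hxA⟩⟩, ?_⟩
    rw [card_erase_of_mem hxB, hB, Nat.add_sub_cancel]
  · rintro (⟨hB, hcard⟩ | ⟨x, hxB, ⟨A, hA, hAB⟩, hcard⟩)
    · exact ⟨⟨B, hB, Subset.rfl⟩, hcard⟩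
    · refine ⟨⟨A, hA, hAB.trans (erase_subset x B)⟩, ?_⟩
      rw [card_erase_of_mem hxB] at hcard
      have := card_pos.2 ⟨x, hxB⟩
      omega

theorem card_rising_succ (h𝒜 : IsAntichain (· ⊆ ·) (𝒜 : Set (Finset α))) :
    #(rising (k + 1) 𝒜) = #(𝒜 # (k + 1)) + #(∂⁺ (rising k 𝒜)) := by
  rw [rising_succ, card_union_of_disjoint (disjoint_left.2 fun B hB hB' => ?_)]
  obtain ⟨D, hD, hDB⟩ := exists_subset_of_mem_upShadow hB'
  obtain ⟨⟨A, hA, hAD⟩, hDcard⟩ := mem_rising.1 hD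
  rw [mem_slice] at hB
  have hAB : A ≠ B := by
    rintro rfl
    have := card_le_card hAD
    omega
  exact h𝒜 hA hB.1 hAB (hAD.trans hDB)

theorem card_filter_card_le_le_card_rising (h𝒜 : IsAntichain (· ⊆ ·) (𝒜 : Set (Finset α)))
    (hk : 2 * k ≤ Fintype.card α + 1) : #{A ∈ 𝒜 | #A ≤ k} ≤ #(rising k 𝒜) := by
  induction k with
  | zero =>
    exact card_le_card fun A hA => by
      rw [mem_filter] at hA
      exact mem_rising.2 ⟨⟨A, hA.1, Subset.rfl⟩, by omega⟩
  | succ k ih =>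
    have hsplit : {A ∈ 𝒜 | #A ≤ k + 1} = 𝒜 # (k + 1) ∪ {A ∈ 𝒜 | #A ≤ k} := by
      ext A; simp only [mem_filter, mem_union, mem_slice, Nat.le_add_one_iff]; tauto
    rw [hsplit, card_rising_succ h𝒜]
    refine (card_union_le _ _).trans (Nat.add_le_add_left ?_ _)
    exact (ih (by omega)).trans (card_le_card_upShadow sized_rising (by omega))

theorem rising_nonempty {A : Finset α} (hA : A ∈ 𝒜) (hAk : #A ≤ k) (hk : k ≤ Fintype.card α) :
    (rising k 𝒜).Nonempty := by
  obtain ⟨B, hAB, -, hB⟩ := exists_subsuperset_card_eq (subset_univ A) hAk (by rwa [card_univ])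
  exact ⟨B, mem_rising.2 ⟨⟨A, hA, hAB⟩, hB⟩⟩

theorem _root_.Set.Intersecting.rising (h𝒜 : (𝒜 : Set (Finset α)).Intersecting) :
    (rising k 𝒜 : Set (Finset α)).Intersecting := by
  intro B hB B' hB' hdisj
  obtain ⟨⟨A, hA, hAB⟩, -⟩ := mem_rising.1 hB
  obtain ⟨⟨A', hA', hAB'⟩, -⟩ := mem_rising.1 hB'
  exact h𝒜 hA hA' (hdisj.mono hAB hAB')

theorem erdos_ko_rado_of_fintype (h𝒜 : (𝒜 : Set (Finset α)).Intersecting)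
    (h𝒜r : (𝒜 : Set (Finset α)).Sized r) (hr : r ≤ Fintype.card α / 2) :
    #𝒜 ≤ (Fintype.card α - 1).choose (r - 1) := by
  let e := (Fintype.equivFin α).finsetCongr.toEmbedding
  have key := erdos_ko_rado (𝒜 := 𝒜.map e) ?_ ?_ hr
  · rwa [card_map] at key
  · simp only [coe_map]
    rintro _ ⟨A, hA, rfl⟩ _ ⟨A', hA', rfl⟩
    simpa [e, Equiv.finsetCongr_apply, disjoint_map] using h𝒜 hA hA'
  · simp only [coe_map]
    rintro _ ⟨A, hA, rfl⟩
    simpa [e, Equiv.finsetCongr_apply] using h𝒜r hA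

theorem card_add_le_choose_of_isAntichain_of_intersecting
    (h𝒜 : IsAntichain (· ⊆ ·) (𝒜 : Set (Finset α))) (h𝒜i : (𝒜 : Set (Finset α)).Intersecting)
    (hk : 2 * k ≤ Fintype.card α) (h𝒜k : ∀ A ∈ 𝒜, #A ≤ k) (hsmall : ∃ A ∈ 𝒜, #A < k) :
    #𝒜 + (Fintype.card α - k) ≤ (Fintype.card α - 1).choose (k - 1) := by
  obtain ⟨A, hA, hAk⟩ := hsmall
  obtain ⟨j, rfl⟩ : ∃ j, k = j + 1 := ⟨k - 1, by omega⟩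
  have hsplit : #𝒜 ≤ #(𝒜 # (j + 1)) + #{A ∈ 𝒜 | #A ≤ j} := by
    refine (card_le_card fun B hB => ?_).trans (card_union_le _ _)
    rw [mem_union, mem_slice, mem_filter]
    rcases (h𝒜k B hB).lt_or_eq with h | h
    exacts [Or.inr ⟨hB, Nat.le_of_lt_succ h⟩, Or.inl ⟨hB, h⟩]
  have hlow := card_filter_card_le_le_card_rising h𝒜 (k := j) (by omega)
  have hgain := card_add_le_card_upShadow sized_rising
    (rising_nonempty hA (by omega : #A ≤ j) (by omega)) (by omega)
  have hekr := erdos_ko_rado_of_fintype h𝒜i.rising (sized_rising (k := j + 1)) (by omega)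
  rw [card_rising_succ h𝒜] at hekr
  omega

end Fintype

end Finset

theorem Pairwise.injective_of_not_subset {κ α : Type*} {f : κ → Finset α}
    (hf : Pairwise fun x y => ¬ f x ⊆ f y) : Function.Injective f :=
  fun _ _ h => by_contra fun hxy => hf hxy h.le

theorem Pairwise.isAntichain_image_univ {κ α : Type*} [Fintype κ] [DecidableEq α]
    {f : κ → Finset α} (hf : Pairwise fun x y => ¬ f x ⊆ f y) :
    IsAntichain (· ⊆ ·) ((univ.image f : Finset (Finset α)) : Set (Finset α)) := by
  rw [coe_image, coe_univ, Set.image_univ]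
  exact hf.range_pairwise

def IsPairCovering {α ι : Type*} (D : α → ι → Fin 2) : Prop :=
  ∀ j l, j ≠ l → ∀ b c, ∃ r, D r j = b ∧ D r l = c

section colFiber

variable {α ι : Type*} [Fintype α] (D : α → ι → Fin 2)

def colFiber (j : ι) (b : Fin 2) : Finset α := {r | D r j = b}

variable {D}

@[simp]
theorem mem_colFiber {r : α} {j : ι} {b : Fin 2} : r ∈ colFiber D j b ↔ D r j = b := by
  simp [colFiber]

variable (D)

theorem card_colFiber_zero_add_one (j : ι) :
    #(colFiber D j 0) + #(colFiber D j 1) = Fintype.card α := by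
  rw [← card_univ, ← card_filter_add_card_filter_not (s := univ) (fun r => D r j = 0)]
  congr 2
  ext r
  simp only [mem_colFiber, mem_filter, mem_univ, true_and]
  omega

end colFiber

namespace IsPairCovering

variable {α ι : Type*} [Fintype α] [DecidableEq α] {D : α → ι → Fin 2}

theorem inter_colFiber_nonempty (hD : IsPairCovering D) {j l : ι} (hjl : j ≠ l) (b c : Fin 2) :
    (colFiber D j b ∩ colFiber D l c).Nonempty := by
  obtain ⟨r, hr⟩ := hD j l hjl b c
  exact ⟨r, by simpa using hr⟩

theorem colFiber_nonempty [Nontrivial ι] (hD : IsPairCovering D) (j : ι) (b : Fin 2) :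
    (colFiber D j b).Nonempty := by
  obtain ⟨l, hl⟩ := exists_ne j
  exact (hD.inter_colFiber_nonempty hl.symm b 0).mono inter_subset_left

theorem not_colFiber_subset [Nontrivial ι] (hD : IsPairCovering D) {j l : ι} {b c : Fin 2}
    (h : (j, b) ≠ (l, c)) : ¬ colFiber D j b ⊆ colFiber D l c := by
  suffices ∃ r, D r j = b ∧ D r l ≠ c by
    obtain ⟨r, hrj, hrl⟩ := this
    exact fun hsub => hrl (mem_colFiber.1 (hsub (mem_colFiber.2 hrj)))
  by_cases hjl : j = l
  · subst hjl
    obtain ⟨r, hr⟩ := hD.colFiber_nonempty j b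
    exact ⟨r, mem_colFiber.1 hr, fun h' => h (by rw [← h', ← mem_colFiber.1 hr])⟩
  · obtain ⟨r, hr⟩ := hD.inter_colFiber_nonempty hjl b (c + 1)
    rw [mem_inter, mem_colFiber, mem_colFiber] at hr
    exact ⟨r, hr.1, by omega⟩

theorem two_mul_card_le_choose [Fintype ι] [Nontrivial ι] (hD : IsPairCovering D) :
    2 * Fintype.card ι ≤ (Fintype.card α).choose (Fintype.card α / 2) := by
  classical
  have hf : Pairwise fun (x y : Fin 2 × ι) => ¬ colFiber D x.2 x.1 ⊆ colFiber D y.2 y.1 :=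
    fun x y hxy => hD.not_colFiber_subset fun h => hxy (Prod.ext (congrArg Prod.snd h)
      (congrArg Prod.fst h))
  have := hf.isAntichain_image_univ.sperner
  rwa [card_image_of_injective _ hf.injective_of_not_subset, card_univ, Fintype.card_prod,
    Fintype.card_fin] at this

theorem card_colFiber_one_eq [Fintype ι] [Nontrivial ι] (hD : IsPairCovering D)
    (hι : (Fintype.card α - 1).choose (Fintype.card α / 2 - 1) <
      Fintype.card ι + (Fintype.card α - Fintype.card α / 2)) (j : ι) :
    #(colFiber D j 1) = Fintype.card α / 2 ∨
      #(colFiber D j 1) = Fintype.card α - Fintype.card α / 2 := by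
  classical
  have hsum := card_colFiber_zero_add_one D
  have hmin : ∀ l, ∃ b, #(colFiber D l b) ≤ Fintype.card α / 2 := fun l => by
    have := hsum l
    by_cases h : #(colFiber D l 0) ≤ Fintype.card α / 2
    exacts [⟨0, h⟩, ⟨1, by omega⟩]
  choose b hb using hmin
  set R : ι → Finset α := fun l => colFiber D l (b l)
  have hR : Pairwise fun x y => ¬ R x ⊆ R y :=
    fun x y hxy => hD.not_colFiber_subset fun h => hxy (congrArg Prod.fst h)
  have hint : ((univ.image R : Finset (Finset α)) : Set (Finset α)).Intersecting := by
    simp only [coe_image, coe_univ, Set.image_univ]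
    rintro _ ⟨x, rfl⟩ _ ⟨y, rfl⟩
    rw [not_disjoint_iff_nonempty_inter]
    by_cases hxy : x = y
    · rw [hxy, inter_self]
      exact hD.colFiber_nonempty y (b y)
    · exact hD.inter_colFiber_nonempty hxy _ _
  by_contra hj
  have hsmall : #(R j) < Fintype.card α / 2 := by
    have h01 := hsum j
    have hbj := hb j
    rcases (by omega : b j = 0 ∨ b j = 1) with h | h <;> rw [h] at hbj <;> simp only [R, h] <;>
      omega
  have := card_add_le_choose_of_isAntichain_of_intersecting hR.isAntichain_image_univ hint
    (Nat.mul_div_le _ _) (forall_mem_image.2 fun l _ => hb l)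
    ⟨R j, mem_image_of_mem _ (mem_univ j), hsmall⟩
  rw [card_image_of_injective _ hR.injective_of_not_subset, card_univ] at this
  omega

end IsPairCovering

theorem Nat.self_le_choose {a b : ℕ} (hb : 1 ≤ b) (hab : 2 * b ≤ a) : a ≤ a.choose b := by
  induction b, hb using Nat.le_induction with
  | base => rw [Nat.choose_one_right]
  | succ b hb ih =>
    exact (ih (by omega)).trans (Nat.choose_le_succ_of_lt_half_left (by omega))

theorem choose_half_lt_two_mul {m n : ℕ} (hm : 5 ≤ m)
    (hn : (m - 1).choose (m / 2 - 1) + m < n + 3 * (m / 2)) :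
    (m - 1).choose ((m - 1) / 2) < 2 * n := by
  obtain ⟨k, rfl | rfl⟩ := Nat.even_or_odd' m
  · have hk : (2 * k - 1) / 2 = k - 1 := by omega
    have hk' : 2 * k / 2 = k := by omega
    have := Nat.self_le_choose (a := 2 * k - 1) (b := k - 1) (by omega) (by omega)
    rw [hk]
    rw [hk'] at hn
    omega
  · obtain ⟨j, rfl⟩ : ∃ j, k = j + 1 := ⟨k - 1, by omega⟩
    have hhalf : (2 * (j + 1) + 1) / 2 = j + 1 := by omega
    simp only [hhalf, Nat.add_sub_cancel] at hn ⊢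
    have hpascal := Nat.choose_succ_right_eq (2 * (j + 1)) j
    have hf := Nat.self_le_choose (a := 2 * (j + 1)) (b := j) (by omega) (by omega)
    rw [show 2 * (j + 1) - j = j + 2 by omega] at hpascal
    rw [show 2 * (j + 1) / 2 = j + 1 by omega]
    by_contra h
    nlinarith [Nat.mul_le_mul_right (j + 1) (not_lt.1 h), Nat.mul_le_mul_right j hf]

section DerivedArray

variable {M N : ℕ}

def derivedArray (C : Fin M → Fin N → Fin 2) (i : Fin N) (ε : Fin 2) :
    {r // C r i = ε} → {j // j ≠ i} → Fin 2 :=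
  fun r j => C r j

theorem IsCoveringArray.isPairCovering_derivedArray {C : Fin M → Fin N → Fin 2}
    (hC : IsCoveringArray M N 2 3 C) (i : Fin N) (ε : Fin 2) :
    IsPairCovering (derivedArray C i ε) := by
  intro j l hjl b c
  have hinj : Function.Injective ![i, j.1, l.1] := by
    have := j.2; have := l.2; have : j.1 ≠ l.1 := fun h => hjl (Subtype.ext h)
    intro x y; fin_cases x <;> fin_cases y <;> simp_all [eq_comm]
  obtain ⟨r, hr⟩ := hC ![i, j.1, l.1] hinj ![ε, b, c]
  exact ⟨⟨r, hr 0⟩, hr 1, hr 2⟩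

theorem card_derivedArray_rows (C : Fin M → Fin N → Fin 2) (i : Fin N) (ε : Fin 2) :
    Fintype.card {r // C r i = ε} = #(colFiber C i ε) := by
  rw [Fintype.card_subtype]; rfl

theorem card_colFiber_derivedArray (C : Fin M → Fin N → Fin 2) (i : Fin N) (ε : Fin 2)
    (j : {j // j ≠ i}) (b : Fin 2) :
    #(colFiber (derivedArray C i ε) j b) = #(colFiber C i ε ∩ colFiber C j b) := by
  rw [← card_map (Function.Embedding.subtype _)]
  congr 1
  ext r
  simp [derivedArray, and_comm]

theorem colWt_eq_card_colFiber (C : Fin M → Fin N → Fin 2) (i : Fin N) :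
    colWt C i = #(colFiber C i 1) := by
  unfold colWt
  congr 1
  ext r
  simp only [mem_filter, mem_univ, true_and, mem_colFiber]
  omega

theorem colDist_add_two_mul_card_inter (C : Fin M → Fin N → Fin 2) (i j : Fin N) :
    colDist C i j + 2 * #(colFiber C i 1 ∩ colFiber C j 1) = colWt C i + colWt C j := by
  simp only [colDist, colWt, colFiber, ← filter_and, card_filter, mul_sum, ← sum_add_distrib]
  refine sum_congr rfl fun r _ => ?_
  generalize C r i = x
  generalize C r j = y
  fin_cases x <;> fin_cases y <;> rfl

end DerivedArray

section WeightAndDistance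

variable {M m n : ℕ} {C : Fin M → Fin (n + 1) → Fin 2}

theorem nontrivial_subtype_ne_of_two_le (hn : 2 ≤ n) (i : Fin (n + 1)) : Nontrivial {j // j ≠ i} :=
  Fintype.one_lt_card_iff_nontrivial.1 (by simp; omega)

theorem le_card_colFiber (hC : IsCoveringArray M (n + 1) 2 3 C) (hn : 2 ≤ n)
    (hsperner : (m - 1).choose ((m - 1) / 2) < 2 * n) (i : Fin (n + 1)) (ε : Fin 2) :
    m ≤ #(colFiber C i ε) := by
  have := nontrivial_subtype_ne_of_two_le hn i
  have hsp := (hC.isPairCovering_derivedArray i ε).two_mul_card_le_choose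
  rw [card_derivedArray_rows, show Fintype.card {j // j ≠ i} = n by simp] at hsp
  by_contra! h
  have := (Nat.choose_le_choose (#(colFiber C i ε) / 2) (Nat.le_sub_one_of_lt h)).trans
    (Nat.choose_le_middle _ _)
  omega

theorem colWt_eq_of_isCoveringArray {C : Fin (2 * m) → Fin (n + 1) → Fin 2}
    (hC : IsCoveringArray (2 * m) (n + 1) 2 3 C) (hn : 2 ≤ n)
    (hsperner : (m - 1).choose ((m - 1) / 2) < 2 * n) (i : Fin (n + 1)) : colWt C i = m := by
  have h0 := le_card_colFiber hC hn hsperner i 0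
  have h1 := le_card_colFiber hC hn hsperner i 1
  have := card_colFiber_zero_add_one C i
  rw [Fintype.card_fin] at this
  rw [colWt_eq_card_colFiber]
  omega

theorem colDist_eq_of_isCoveringArray (hC : IsCoveringArray M (n + 1) 2 3 C) (hn : 2 ≤ n)
    (hW : ∀ i, colWt C i = m) (hchoose : (m - 1).choose (m / 2 - 1) < n + (m - m / 2))
    {i j : Fin (n + 1)} (hij : i ≠ j) :
    colDist C i j = 2 * (m / 2) ∨ colDist C i j = 2 * ((m + 1) / 2) := by
  have := nontrivial_subtype_ne_of_two_le hn i
  have hrows : Fintype.card {r // C r i = 1} = m := by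
    rw [card_derivedArray_rows, ← colWt_eq_card_colFiber, hW]
  have h := (hC.isPairCovering_derivedArray i 1).card_colFiber_one_eq
    (by rw [hrows, show Fintype.card {j // j ≠ i} = n by simp]; exact hchoose) ⟨j, hij.symm⟩
  rw [card_colFiber_derivedArray, hrows] at h
  dsimp only at h
  have := colDist_add_two_mul_card_inter C i j
  rw [hW, hW] at this
  omega

end WeightAndDistance

theorem weight_and_distance_general (m n : ℕ) (hm : 5 ≤ m)
    (hn1 : (m-1).choose (m/2 - 1) + m < n + 3 * (m/2))
    (C : Fin (2*m) → Fin (n+1) → Fin 2)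
    (hC : IsCoveringArray (2*m) (n+1) 2 3 C) :
    (∀ i : Fin (n+1), colWt C i = m) ∧
    (∀ i j : Fin (n+1), i ≠ j →
      colDist C i j = 2 * (m/2) ∨ colDist C i j = 2 * ((m+1)/2)) := by
  have hsperner := choose_half_lt_two_mul hm hn1
  have hn : 2 ≤ n := by
    have := Nat.self_le_choose (a := m - 1) (b := (m - 1) / 2) (by omega) (by omega)
    omega
  have hW : ∀ i, colWt C i = m := colWt_eq_of_isCoveringArray hC hn hsperner
  exact ⟨hW, fun i j hij => colDist_eq_of_isCoveringArray hC hn hW (by omega) hij⟩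

/-- if `m ≥ 5` and `binom(m-1,⌊m/2⌋-1) + m - 3⌊m/2⌋ < n ≤ binom(m-1,⌊m/2⌋-1)`,
then every column of a `2m × (n+1)` binary 3-covering array has weight `m`, and any two
distinct columns are at Hamming distance `2⌊m/2⌋` or `2⌈m/2⌉`. -/
theorem weight_and_distance (m n : ℕ) (hm : 5 ≤ m)
    (hn1 : (m-1).choose (m/2 - 1) + m < n + 3 * (m/2))
    (hn2 : n ≤ (m-1).choose (m/2 - 1))
    (C : Fin (2*m) → Fin (n+1) → Fin 2)
    (hC : IsCoveringArray (2*m) (n+1) 2 3 C) :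
    (∀ i : Fin (n+1), colWt C i = m) ∧
    (∀ i j : Fin (n+1), i ≠ j →
      colDist C i j = 2 * (m/2) ∨ colDist C i j = 2 * ((m+1)/2)) :=
  weight_and_distance_general m n hm hn1 C hC
end
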